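/- arXiv:1805.03917 — 9 statements merged into one kernel-verified Lean document; each statement's English description precedes it below -/
import Mathlib

section
/- Let $(A_n)_{n\ge 0}$ be a sequence of abelian groups with $A_0 = 0$, together with homomorphisms $s_n \colon A_n \to A_{n+1}$ and homomorphisms $\tau_{k,n} \colon A_n \to A_k$ for all $1 \le k \le n$, such that $\tau_{n,n} = \mathrm{id}$ and, for all $1 \le k \le n$, the image of $\tau_{k,n} - \tau_{k,n+1} \circ s_n$ is contained in the image of $s_{k-1}$. Then every $s_n$ is split-injective (i.e.\ admits a left inverse homomorphism). -/
/-- **Dold's splitting lemma** (Lemma 2 of Dold, "Decomposition theorems for S(n)-complexes"):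
given abelian groups `A n` with `A 0 = 0`, stabilisation maps `s n : A n → A (n+1)` and
transfer-like maps `τ k n : A n → A k` for `1 ≤ k ≤ n` with `τ n n = id` and
`im (τ (j+1) n - τ (j+1) (n+1) ∘ s n) ⊆ im (s j)`, every `s n` is split-injective. -/
theorem dold_split_injective
    (A : ℕ → Type*) [∀ n, AddCommGroup (A n)]
    (hA0 : ∀ x : A 0, x = 0)
    (s : ∀ n, A n →+ A (n + 1))
    (τ : ∀ k n, 1 ≤ k → k ≤ n → (A n →+ A k))
    (hdiag : ∀ n (hn : 1 ≤ n) (x : A n), τ n n hn le_rfl x = x)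
    (hrel : ∀ j n (h : j + 1 ≤ n) (x : A n),
      ∃ y : A j,
        τ (j + 1) n (Nat.succ_le_succ (Nat.zero_le j)) h x
          - τ (j + 1) (n + 1) (Nat.succ_le_succ (Nat.zero_le j))
              (h.trans (Nat.le_succ n)) (s n x)
          = s j y) :
    ∀ n, ∃ r : A (n + 1) →+ A n, ∀ x : A n, r (s n x) = x := by
  -- Key claim: a coherent family of retractions `ρ m : A m →+ A n`.
  have key : ∀ n, ∃ ρ : ∀ m, A m →+ A n,
      (∀ x : A n, ρ n x = x) ∧
      ∀ m, n ≤ m → ∀ x : A m, ρ (m + 1) (s m x) = ρ m x := by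
    intro n
    induction n with
    | zero =>
      refine ⟨fun _ => 0, fun x => ?_, fun _ _ _ => rfl⟩
      rw [hA0 x]; rfl
    | succ n ih =>
      obtain ⟨ρ', hid, hcoh⟩ := ih
      -- `P` is the projection killing the image of `s n`.
      set P : A (n + 1) →+ A (n + 1) :=
        AddMonoidHom.id (A (n + 1)) - (s n).comp (ρ' (n + 1)) with hPdef
      have hP : ∀ z : A (n + 1), P z = z - s n (ρ' (n + 1) z) := fun z => rfl
      have hPs : ∀ y : A n, P (s n y) = 0 := by
        intro y
        rw [hP, hcoh n le_rfl y, hid y, sub_self]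
      refine ⟨fun m =>
        if h : n + 1 ≤ m then
          P.comp (τ (n + 1) m (Nat.succ_le_succ (Nat.zero_le n)) h) + (s n).comp (ρ' m)
        else 0, ?_, ?_⟩
      · intro x
        simp only [dif_pos (le_refl (n + 1))]
        simp only [AddMonoidHom.add_apply, AddMonoidHom.comp_apply]
        rw [hdiag (n + 1) (Nat.succ_le_succ (Nat.zero_le n)) x, hP]
        abel
      · intro m hm x
        have hm' : n + 1 ≤ m + 1 := hm.trans (Nat.le_succ m)
        simp only [dif_pos hm, dif_pos hm']
        simp only [AddMonoidHom.add_apply, AddMonoidHom.comp_apply]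
        obtain ⟨y, hy⟩ := hrel n m hm x
        have hτ : τ (n + 1) (m + 1) (Nat.succ_le_succ (Nat.zero_le n)) hm' (s m x)
            = τ (n + 1) m (Nat.succ_le_succ (Nat.zero_le n)) hm x - s n y := by
          rw [← hy]; abel
        rw [hτ, map_sub, hPs, sub_zero, hcoh m (Nat.le_of_succ_le hm) x]
  intro n
  obtain ⟨ρ, hid, hcoh⟩ := key n
  exact ⟨ρ (n + 1), fun x => by rw [hcoh n le_rfl x, hid x]⟩
end

section
/- Let $G$ be a topological group acting continuously on a topological space $Y$, and suppose $Y$ is $G$-locally retractile: every $y \in Y$ has an open neighbourhood $V$ and a continuous map $\gamma \colon V \to G$ with $\gamma(y) = e$ and $\gamma(v) \cdot y = v$ for all $v \in V$. Then every $G$-equivariant continuous map $f \colon X \to Y$ from a $G$-space $X$ is a fibre bundle (i.e.\ locally trivial). -/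
/-- A `G`-space `X` is *`G`-locally retractile* if every point `x` has an open neighbourhood
`V` and a continuous map `γ : V → G` with `γ x = 1` and `γ v • x = v` for all `v ∈ V`. -/
def IsLocallyRetractile (G X : Type*) [Group G] [TopologicalSpace G]
    [TopologicalSpace X] [MulAction G X] : Prop :=
  ∀ x : X, ∃ (V : Set X) (γ : V → G), IsOpen V ∧ x ∈ V ∧ Continuous γ ∧
    (∀ hx : x ∈ V, γ ⟨x, hx⟩ = 1) ∧ ∀ v : V, γ v • x = (v : X)

/-- **Palais' fibre bundle criterion** (Proposition 4.5 of the paper): if `Y` is `G`-locally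
retractile, then any `G`-equivariant continuous map `f : X → Y` is a fibre bundle, i.e.
locally trivial: every `y : Y` has an open neighbourhood `V` over which `f` is homeomorphic,
over `V`, to the projection `F × V → V` (with fibre `F = f ⁻¹' {y}`). -/
theorem fiberBundle_of_equivariant_of_locallyRetractile
    {G X Y : Type*} [Group G] [TopologicalSpace G] [IsTopologicalGroup G]
    [TopologicalSpace X] [TopologicalSpace Y]
    [MulAction G X] [MulAction G Y] [ContinuousSMul G X] [ContinuousSMul G Y]
    (hY : IsLocallyRetractile G Y)
    (f : X → Y) (hf : Continuous f)
    (heq : ∀ (g : G) (x : X), f (g • x) = g • f x) :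
    ∀ y : Y, ∃ V : Set Y, IsOpen V ∧ y ∈ V ∧
      ∃ e : (f ⁻¹' V) ≃ₜ (f ⁻¹' {y}) × V, ∀ p : f ⁻¹' V, ((e p).2 : Y) = f (p : X) := by
  intro y
  obtain ⟨V, γ, hVopen, hyV, hγc, hγ1, hγ⟩ := hY y
  refine ⟨V, hVopen, hyV, ?_⟩
  have hfib : ∀ p : f ⁻¹' V, (γ ⟨f p, p.2⟩)⁻¹ • (p : X) ∈ f ⁻¹' {y} := by
    intro p
    have : f ((γ ⟨f p, p.2⟩)⁻¹ • (p : X)) = (γ ⟨f p, p.2⟩)⁻¹ • f (p : X) := heq _ _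
    simp only [Set.mem_preimage, Set.mem_singleton_iff, this]
    rw [inv_smul_eq_iff, hγ ⟨f p, p.2⟩]
  have hmem : ∀ (z : f ⁻¹' {y}) (v : V), γ v • (z : X) ∈ f ⁻¹' V := by
    intro z v
    have h1 : f ((z : X)) = y := z.2
    have : f (γ v • (z : X)) = γ v • f (z : X) := heq _ _
    simp only [Set.mem_preimage, this, h1, hγ v]
    exact v.2
  refine ⟨{
    toFun := fun p => (⟨(γ ⟨f p, p.2⟩)⁻¹ • (p : X), hfib p⟩, ⟨f p, p.2⟩)
    invFun := fun q => ⟨γ q.2 • (q.1 : X), hmem q.1 q.2⟩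
    left_inv := by
      intro p
      ext
      simp
    right_inv := by
      intro ⟨z, v⟩
      have h1 : f ((z : X)) = y := z.2
      have hv : f (γ v • (z : X)) = (v : Y) := by
        rw [heq, h1, hγ v]
      have hveq : (⟨f (γ v • (z : X)), (hmem z v : _)⟩ : V) = v := Subtype.ext hv
      simp only
      refine Prod.ext ?_ hveq
      apply Subtype.ext
      simp only
      rw [show (γ ⟨f (γ v • (z : X)), hmem z v⟩) = γ v from congrArg γ hveq]
      simp
    continuous_toFun := by
      apply Continuous.prodMk
      · apply Continuous.subtype_mk
        have hc : Continuous fun p : f ⁻¹' V => (⟨f p, p.2⟩ : V) :=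
          Continuous.subtype_mk (hf.comp continuous_subtype_val) _
        exact ((hγc.comp hc).inv).smul continuous_subtype_val
      · exact Continuous.subtype_mk (hf.comp continuous_subtype_val) _
    continuous_invFun := by
      apply Continuous.subtype_mk
      exact ((hγc.comp (continuous_snd)).smul (continuous_subtype_val.comp continuous_fst))
  }, fun p => rfl⟩
end

section
/- Let $G$ be a topological group acting continuously on a topological space $Y$ such that $Y$ is $G$-locally retractile. Then every $G$-equivariant continuous map $f \colon X \to Y$ is a Serre fibration. -/
open unitInterval

/-- A map `f : X → Y` is a *Serre fibration* if it has the homotopy lifting property with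
respect to all cubes `[0,1]^k`. -/
def IsSerreFibration {X Y : Type*} [TopologicalSpace X] [TopologicalSpace Y]
    (f : X → Y) : Prop :=
  ∀ (k : ℕ) (H : C((Fin k → I) × I, Y)) (h₀ : C((Fin k → I), X)),
    (∀ a, f (h₀ a) = H (a, 0)) →
    ∃ L : C((Fin k → I) × I, X),
      (∀ a, L (a, 0) = h₀ a) ∧ ∀ p, f (L p) = H p


section SerreAux
open Set

lemma glue_closed {α β : Type*} [TopologicalSpace α] [TopologicalSpace β]
    {A B : Set α} (hA : IsClosed A) (hB : IsClosed B)
    (hAB : A ∪ B = Set.univ) {f : α → β}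
    (hfA : ContinuousOn f A) (hfB : ContinuousOn f B) : Continuous f := by
  rw [continuous_iff_isClosed]
  intro t ht
  obtain ⟨u, hu, hu'⟩ := continuousOn_iff_isClosed.1 hfA t ht
  obtain ⟨v, hv, hv'⟩ := continuousOn_iff_isClosed.1 hfB t ht
  have : f ⁻¹' t = (u ∩ A) ∪ (v ∩ B) := by
    rw [← hu', ← hv', ← inter_union_distrib_left, hAB, inter_univ]
  rw [this]
  exact (hu.inter hA).union (hv.inter hB)


lemma step_lemma {G X Y K : Type*} [Group G] [TopologicalSpace G] [IsTopologicalGroup G]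
    [TopologicalSpace X] [TopologicalSpace Y] [MulAction G X] [MulAction G Y]
    [ContinuousSMul G X] [ContinuousSMul G Y] [TopologicalSpace K]
    (f : X → Y) (heq : ∀ (g : G) (x : X), f (g • x) = g • f x)
    (H' : K × ℝ → Y) (hH' : Continuous H')
    (φ φ' β : K → ℝ) (hσ : Continuous φ) (hφ' : Continuous φ') (hβ : Continuous β)
    (hβ0 : ∀ a, 0 ≤ β a) (hβσ : ∀ a, β a ≤ φ a) (hσφ' : ∀ a, φ a ≤ φ' a)
    (C : Set K) (hC : IsClosed C)
    (hout : ∀ a ∈ closure Cᶜ, φ a = φ' a)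
    (V : Set Y) (y : Y) (γ : V → G) (hγc : Continuous γ)
    (hγ : ∀ v : V, γ v • y = (v : Y))
    (hmem : ∀ a ∈ C, ∀ s : ℝ, β a ≤ s → s ≤ φ' a → H' (a, s) ∈ V)
    (M : K × ℝ → X) (hM : Continuous M)
    (hMf : ∀ p : K × ℝ, f (M p) = H' (p.1, min p.2 (φ p.1))) :
    ∃ M' : K × ℝ → X, Continuous M' ∧
      (∀ p : K × ℝ, f (M' p) = H' (p.1, min p.2 (φ' p.1))) ∧
      (∀ p : K × ℝ, p.2 ≤ 0 → M' p = M p) := by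
  classical
  set θ : K × ℝ → ℝ := fun p => min (max p.2 (β p.1)) (φ p.1) with hθdef
  set θ' : K × ℝ → ℝ := fun p => min (max p.2 (β p.1)) (φ' p.1) with hθ'def
  have hθc : Continuous θ := (continuous_snd.max (hβ.comp continuous_fst)).min
    (hσ.comp continuous_fst)
  have hθ'c : Continuous θ' := (continuous_snd.max (hβ.comp continuous_fst)).min
    (hφ'.comp continuous_fst)
  have hWθ : ∀ p : K × ℝ, p.1 ∈ C → H' (p.1, θ p) ∈ V := fun p hp =>
    hmem _ hp _ (le_min (le_max_right _ _) (hβσ _)) ((min_le_right _ _).trans (hσφ' _))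
  have hWθ' : ∀ p : K × ℝ, p.1 ∈ C → H' (p.1, θ' p) ∈ V := fun p hp =>
    hmem _ hp _ (le_min (le_max_right _ _) ((hβσ _).trans (hσφ' _))) (min_le_right _ _)
  set c : K × ℝ → G := fun p =>
    if hp : p.1 ∈ C then
      γ ⟨H' (p.1, θ' p), hWθ' p hp⟩ * (γ ⟨H' (p.1, θ p), hWθ p hp⟩)⁻¹
    else 1 with hcdef
  -- continuity of c
  have hABu : (C ×ˢ (univ : Set ℝ)) ∪ ((closure Cᶜ) ×ˢ (univ : Set ℝ)) = univ := by
    ext p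
    simp only [mem_union, mem_prod, mem_univ, and_true, iff_true]
    by_cases hp : p.1 ∈ C
    · exact Or.inl hp
    · exact Or.inr (subset_closure hp)
  have hcA : ContinuousOn c (C ×ˢ (univ : Set ℝ)) := by
    rw [continuousOn_iff_continuous_restrict]
    have hmemA : ∀ q : ↥(C ×ˢ (univ : Set ℝ)), (q : K × ℝ).1 ∈ C := fun q => q.2.1
    have hre : (C ×ˢ (univ : Set ℝ)).domRestrict c = fun (q : ↥(C ×ˢ (univ : Set ℝ))) =>
        γ ⟨H' ((q : K × ℝ).1, θ' (q : K × ℝ)), hWθ' _ (hmemA q)⟩ *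
          (γ ⟨H' ((q : K × ℝ).1, θ (q : K × ℝ)), hWθ _ (hmemA q)⟩)⁻¹ := by
      funext q
      simp only [domRestrict, hcdef, dif_pos (hmemA q)]
    rw [hre]
    have h1 : Continuous fun q : ↥(C ×ˢ (univ : Set ℝ)) =>
        (⟨H' ((q : K × ℝ).1, θ' (q : K × ℝ)), hWθ' _ (hmemA q)⟩ : V) :=
      Continuous.subtype_mk (hH'.comp ((continuous_fst.comp continuous_subtype_val).prodMk
        (hθ'c.comp continuous_subtype_val))) _
    have h2 : Continuous fun q : ↥(C ×ˢ (univ : Set ℝ)) =>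
        (⟨H' ((q : K × ℝ).1, θ (q : K × ℝ)), hWθ _ (hmemA q)⟩ : V) :=
      Continuous.subtype_mk (hH'.comp ((continuous_fst.comp continuous_subtype_val).prodMk
        (hθc.comp continuous_subtype_val))) _
    exact (hγc.comp h1).mul ((hγc.comp h2).inv)
  have hcB : ContinuousOn c ((closure Cᶜ) ×ˢ (univ : Set ℝ)) := by
    apply continuousOn_const.congr
    intro p hp
    have hσeq : φ p.1 = φ' p.1 := hout p.1 hp.1
    by_cases hpc : p.1 ∈ C
    · have hθeq : θ p = θ' p := by simp only [hθdef, hθ'def, hσeq]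
      simp only [hcdef, dif_pos hpc]
      have hHeq : H' (p.1, θ' p) = H' (p.1, θ p) := by rw [hθeq]
      have : γ (⟨H' (p.1, θ' p), hWθ' p hpc⟩ : V) = γ ⟨H' (p.1, θ p), hWθ p hpc⟩ :=
        congrArg γ (Subtype.ext hHeq)
      rw [this, mul_inv_cancel]
    · simp only [hcdef, dif_neg hpc]
  have hcc : Continuous c := glue_closed (hC.prod isClosed_univ)
    (isClosed_closure.prod isClosed_univ) hABu hcA hcB
  have hkey : ∀ v w : V, ((γ w) * (γ v)⁻¹) • (v : Y) = (w : Y) := by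
    intro v w
    rw [mul_smul, ← hγ v, inv_smul_smul, hγ w]
  refine ⟨fun p => c p • M p, hcc.smul hM, ?_, ?_⟩
  · intro p
    show f (c p • M p) = _
    rw [heq, hMf]
    by_cases hpc : p.1 ∈ C
    · simp only [hcdef, dif_pos hpc]
      rcases le_total (β p.1) p.2 with h | h
      · have hmax : max p.2 (β p.1) = p.2 := max_eq_left h
        have hθ1 : θ p = min p.2 (φ p.1) := by simp only [hθdef, hmax]
        have hθ2 : θ' p = min p.2 (φ' p.1) := by simp only [hθ'def, hmax]
        rw [← hθ1, ← hθ2]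
        exact hkey ⟨H' (p.1, θ p), hWθ p hpc⟩ ⟨H' (p.1, θ' p), hWθ' p hpc⟩
      · have hmax : max p.2 (β p.1) = β p.1 := max_eq_right h
        have hθ1 : θ p = β p.1 := by
          simp only [hθdef, hmax]; exact min_eq_left (hβσ p.1)
        have hθ2 : θ' p = β p.1 := by
          simp only [hθ'def, hmax]; exact min_eq_left ((hβσ p.1).trans (hσφ' p.1))
        have hmin : min p.2 (φ p.1) = p.2 := min_eq_left (h.trans (hβσ p.1))
        have hmin' : min p.2 (φ' p.1) = p.2 := min_eq_left ((h.trans (hβσ p.1)).trans (hσφ' p.1))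
        have hHeq : H' (p.1, θ' p) = H' (p.1, θ p) := by rw [hθ1, hθ2]
        have hvw : γ (⟨H' (p.1, θ' p), hWθ' p hpc⟩ : V) = γ ⟨H' (p.1, θ p), hWθ p hpc⟩ :=
          congrArg γ (Subtype.ext hHeq)
        rw [hvw, mul_inv_cancel, one_smul, hmin, hmin']
    · simp only [hcdef, dif_neg hpc, one_smul]
      rw [hout p.1 (subset_closure hpc)]
  · intro p hp
    have hc1 : c p = 1 := by
      by_cases hpc : p.1 ∈ C
      · have h : p.2 ≤ β p.1 := hp.trans (hβ0 p.1)
        have hmax : max p.2 (β p.1) = β p.1 := max_eq_right h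
        have hθ1 : θ p = β p.1 := by
          simp only [hθdef, hmax]; exact min_eq_left (hβσ p.1)
        have hθ2 : θ' p = β p.1 := by
          simp only [hθ'def, hmax]; exact min_eq_left ((hβσ p.1).trans (hσφ' p.1))
        simp only [hcdef, dif_pos hpc]
        have hHeq : H' (p.1, θ' p) = H' (p.1, θ p) := by rw [hθ1, hθ2]
        have hvw : γ (⟨H' (p.1, θ' p), hWθ' p hpc⟩ : V) = γ ⟨H' (p.1, θ p), hWθ p hpc⟩ :=
          congrArg γ (Subtype.ext hHeq)
        rw [hvw, mul_inv_cancel]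
      · simp only [hcdef, dif_neg hpc]
    show c p • M p = M p
    rw [hc1, one_smul]

def LiftUpTo {X Y K : Type*} [TopologicalSpace X] [TopologicalSpace Y] [TopologicalSpace K]
    (f : X → Y) (H' : K × ℝ → Y) (h₀ : K → X) (φ : K → ℝ) : Prop :=
  ∃ M : K × ℝ → X, Continuous M ∧
    (∀ p : K × ℝ, f (M p) = H' (p.1, min p.2 (φ p.1))) ∧
    (∀ p : K × ℝ, p.2 ≤ 0 → M p = h₀ p.1)

lemma liftUpTo_congr {X Y K : Type*} [TopologicalSpace X] [TopologicalSpace Y]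
    [TopologicalSpace K] {f : X → Y} {H' : K × ℝ → Y} {h₀ : K → X} {φ ψ : K → ℝ}
    (h : ∀ x, φ x = ψ x) (hP : LiftUpTo f H' h₀ φ) : LiftUpTo f H' h₀ ψ := by
  obtain ⟨M, h1, h2, h3⟩ := hP
  exact ⟨M, h1, fun p => (h2 p).trans (by rw [h p.1]), h3⟩

end SerreAux

section MainProof
open Set

/-- If `Y` is `G`-locally retractile, then any `G`-equivariant continuous map `f : X → Y`
is a Serre fibration. -/
theorem serreFibration_of_equivariant_of_locallyRetractile
    {G X Y : Type*} [Group G] [TopologicalSpace G] [IsTopologicalGroup G]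
    [TopologicalSpace X] [TopologicalSpace Y]
    [MulAction G X] [MulAction G Y] [ContinuousSMul G X] [ContinuousSMul G Y]
    (hY : IsLocallyRetractile G Y)
    (f : X → Y) (hf : Continuous f)
    (heq : ∀ (g : G) (x : X), f (g • x) = g • f x) :
    IsSerreFibration f := by
  intro k H h₀ hcomp
  have hY' : ∀ x : Y, ∃ (V : Set Y) (γ : V → G), IsOpen V ∧ x ∈ V ∧ Continuous γ ∧
      (∀ hx : x ∈ V, γ ⟨x, hx⟩ = 1) ∧ ∀ v : V, γ v • x = (v : Y) := hY
  clear hY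
  rename' hY' => hY
  classical
  choose V γv hVopen hVmem hγcont hγone hγact using hY
  set H' : (Fin k → I) × ℝ → Y :=
    fun p => H (p.1, projIcc 0 1 zero_le_one p.2) with hH'def
  have hH' : Continuous H' :=
    H.continuous.comp (continuous_fst.prodMk (continuous_projIcc.comp continuous_snd))
  have hcover : (univ : Set ((Fin k → I) × I)) ⊆ ⋃ y : Y, (⇑H) ⁻¹' (V y) :=
    fun p _ => mem_iUnion.2 ⟨H p, hVmem (H p)⟩
  obtain ⟨δ, hδ0, hδ⟩ := lebesgue_number_lemma_of_metric isCompact_univ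
    (fun y => (hVopen y).preimage H.continuous) hcover
  obtain ⟨n0, hn0⟩ := exists_nat_one_div_lt hδ0
  set N : ℕ := n0 + 1 with hNdef
  have hN : (0 : ℝ) < N := by positivity
  have h1N : (1 : ℝ) / N < δ := by
    have hcast : ((N : ℝ)) = (n0 : ℝ) + 1 := by rw [hNdef]; push_cast; ring
    rw [hcast]; exact hn0
  have hcen : ∀ (m : ℕ) (b : Fin k → I), ∃ y : Y,
      Metric.ball ((b, projIcc 0 1 zero_le_one ((2*(m:ℝ)+1)/(2*N))) : (Fin k → I) × I) δ ⊆
        (⇑H) ⁻¹' (V y) := fun m b => hδ _ (mem_univ _)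
  choose yc hyc using hcen
  have hkey : ∀ (m : ℕ) (b a : Fin k → I), dist a b ≤ δ/2 →
      ∀ s : ℝ, (m:ℝ)/N ≤ s → s ≤ ((m:ℝ)+1)/N → H' (a, s) ∈ V (yc m b) := by
    intro m b a hab s hs1 hs2
    have hball : ((a, projIcc 0 1 zero_le_one s) : (Fin k → I) × I) ∈
        Metric.ball ((b, projIcc 0 1 zero_le_one ((2*(m:ℝ)+1)/(2*N)))) δ := by
      rw [Metric.mem_ball, Prod.dist_eq]
      apply max_lt
      · exact lt_of_le_of_lt hab (half_lt_self hδ0)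
      · have hl : dist (projIcc 0 1 zero_le_one s)
            (projIcc 0 1 zero_le_one ((2*(m:ℝ)+1)/(2*N))) ≤ dist s ((2*(m:ℝ)+1)/(2*N)) := by
          have := (LipschitzWith.projIcc (zero_le_one : (0:ℝ) ≤ 1)).dist_le_mul s
            ((2*(m:ℝ)+1)/(2*N))
          simpa using this
        have e1 : (2*(m:ℝ)+1)/(2*N) + 1/(2*N) = ((m:ℝ)+1)/N := by
          field_simp; ring
        have e2 : (2*(m:ℝ)+1)/(2*N) - 1/(2*N) = (m:ℝ)/N := by
          field_simp; ring
        have habs : dist s ((2*(m:ℝ)+1)/(2*N)) ≤ 1/(2*N) := by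
          rw [Real.dist_eq, abs_le]
          constructor <;> linarith
        have h2N : 1/(2*(N:ℝ)) < δ := by
          have h12 : 1/(2*(N:ℝ)) ≤ 1/N := by
            apply one_div_le_one_div_of_le hN
            linarith
          linarith
        exact lt_of_le_of_lt (hl.trans habs) h2N
    have := hyc m b hball
    simpa [hH'def] using this
  have hcov2 : (univ : Set (Fin k → I)) ⊆ ⋃ b : Fin k → I, Metric.ball b (δ/2) :=
    fun a _ => mem_iUnion.2 ⟨a, Metric.mem_ball_self (by positivity)⟩
  obtain ⟨A, hA⟩ := isCompact_univ.elim_finite_subcover _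
    (fun b : Fin k → I => Metric.isOpen_ball) hcov2
  set g : (Fin k → I) → (Fin k → I) → ℝ := fun b x => max (δ/2 - dist x b) 0 with hgdef
  have hgc : ∀ b, Continuous (g b) := fun b =>
    (continuous_const.sub (continuous_id.dist continuous_const)).max continuous_const
  have hg0 : ∀ b x, 0 ≤ g b x := fun b x => le_max_right _ _
  have hgpos : ∀ b x, dist x b < δ/2 → 0 < g b x := fun b x h =>
    lt_max_iff.2 (Or.inl (by linarith))
  have hgz : ∀ b x, ¬ dist x b < δ/2 → g b x = 0 := fun b x h =>
    max_eq_right (by push_neg at h; linarith)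
  set S : (Fin k → I) → ℝ := fun x => ∑ b ∈ A, g b x with hSdef
  have hSc : Continuous S := continuous_finset_sum _ fun b _ => hgc b
  have hS : ∀ x, 0 < S x := by
    intro x
    obtain ⟨b, hbA, hxb⟩ := mem_iUnion₂.1 (hA (mem_univ x))
    exact Finset.sum_pos' (fun c _ => hg0 c x) ⟨b, hbA, hgpos b x (Metric.mem_ball.1 hxb)⟩
  have hNS : ∀ x, (N : ℝ) * S x ≠ 0 := fun x => by have := hS x; positivity
  set P : ((Fin k → I) → ℝ) → Prop := fun φ =>
    ∃ M : (Fin k → I) × ℝ → X, Continuous M ∧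
      (∀ p : (Fin k → I) × ℝ, f (M p) = H' (p.1, min p.2 (φ p.1))) ∧
      (∀ p : (Fin k → I) × ℝ, p.2 ≤ 0 → M p = h₀ p.1) with hPdef
  have Pext : ∀ φ ψ : (Fin k → I) → ℝ, (∀ x, φ x = ψ x) → P φ → P ψ := by
    intro φ τ h hP
    obtain ⟨M, h1, h2, h3⟩ := hP
    exact ⟨M, h1, fun p => (h2 p).trans (by rw [h p.1]), h3⟩
  have base : P (fun _ => (0:ℝ)) := by
    refine ⟨fun p => h₀ p.1, h₀.continuous.comp continuous_fst, ?_, fun p _ => rfl⟩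
    intro p
    show f (h₀ p.1) = H' (p.1, min p.2 0)
    have hle : min p.2 (0:ℝ) ≤ 0 := min_le_right _ _
    rw [hcomp p.1]
    simp only [hH'def]
    rw [projIcc_of_le_left _ hle]
    rfl
  have slab : ∀ m : ℕ, P (fun _ => (m:ℝ)/N) → P (fun _ => ((m:ℝ)+1)/N) := by
    intro m hm
    have key : ∀ B : Finset (Fin k → I), B ⊆ A →
        P (fun x => (m:ℝ)/N + (∑ c ∈ B, g c x) / ((N : ℝ) * S x)) := by
      intro B
      induction B using Finset.induction_on with
      | empty =>
        intro _
        refine Pext (fun _ => (m:ℝ)/N)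
          (fun x => (m:ℝ)/N + (∑ c ∈ (∅ : Finset (Fin k → I)), g c x) / ((N : ℝ) * S x))
          (fun x => by simp) hm
      | @insert b B hbB ih =>
        intro hins
        have hBA : B ⊆ A := (Finset.subset_insert b B).trans hins
        obtain ⟨M, hMc, hMf, hM0⟩ := ih hBA
        set φ : (Fin k → I) → ℝ := fun x => (m:ℝ)/N + (∑ c ∈ B, g c x) / ((N : ℝ) * S x)
          with hσdef
        set φ' : (Fin k → I) → ℝ :=
          fun x => (m:ℝ)/N + (∑ c ∈ insert b B, g c x) / ((N : ℝ) * S x) with hφ'def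
        have hσc : Continuous φ := continuous_const.add
          ((continuous_finset_sum _ fun c _ => hgc c).div (continuous_const.mul hSc) hNS)
        have hφ'c : Continuous φ' := continuous_const.add
          ((continuous_finset_sum _ fun c _ => hgc c).div (continuous_const.mul hSc) hNS)
        have hsumnn : ∀ (B' : Finset (Fin k → I)) (x : Fin k → I),
            (0:ℝ) ≤ ∑ c ∈ B', g c x := fun B' x => Finset.sum_nonneg fun c _ => hg0 c x
        have hβσ : ∀ x, (m:ℝ)/N ≤ φ x := by
          intro x
          have h1 : (0:ℝ) ≤ (∑ c ∈ B, g c x) / ((N : ℝ) * S x) :=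
            div_nonneg (hsumnn B x) (by have := hS x; positivity)
          simp only [hσdef]; linarith
        have hσφ' : ∀ x, φ x ≤ φ' x := by
          intro x
          have hle : ∑ c ∈ B, g c x ≤ ∑ c ∈ insert b B, g c x := by
            rw [Finset.sum_insert hbB]
            have := hg0 b x; linarith
          have h2 : (∑ c ∈ B, g c x) / ((N : ℝ) * S x) ≤
              (∑ c ∈ insert b B, g c x) / ((N : ℝ) * S x) :=
            (div_le_div_iff_of_pos_right (by have := hS x; positivity)).2 hle
          simp only [hσdef, hφ'def]; linarith
        have hφ'le : ∀ x, φ' x ≤ ((m:ℝ)+1)/N := by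
          intro x
          have hsum : ∑ c ∈ insert b B, g c x ≤ S x := by
            rw [hSdef]
            exact Finset.sum_le_sum_of_subset_of_nonneg hins (fun c _ _ => hg0 c x)
          have h1 : (∑ c ∈ insert b B, g c x) / ((N : ℝ) * S x) ≤ S x / ((N : ℝ) * S x) :=
            (div_le_div_iff_of_pos_right (by have := hS x; positivity)).2 hsum
          have h2 : S x / ((N:ℝ) * S x) = 1/N := by
            rw [div_eq_div_iff (by have := hS x; positivity) hN.ne']; ring
          have h3 : (m:ℝ)/N + 1/N = ((m:ℝ)+1)/N := by ring
          simp only [hφ'def]; linarith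
        have hsupp : Function.support (g b) ⊆ Metric.ball b (δ/2) := by
          intro z hz
          rw [Function.mem_support] at hz
          rw [Metric.mem_ball]
          by_contra h
          exact hz (hgz b z h)
        have hCsub : tsupport (g b) ⊆ Metric.closedBall b (δ/2) :=
          closure_minimal (hsupp.trans Metric.ball_subset_closedBall) Metric.isClosed_closedBall
        have hout : ∀ a ∈ closure (tsupport (g b))ᶜ, φ a = φ' a := by
          intro a ha
          have hgb0 : g b a = 0 := by
            by_contra hne
            have hmemball : a ∈ Metric.ball b (δ/2) := hsupp (Function.mem_support.2 hne)
            have hballsub : Metric.ball b (δ/2) ⊆ tsupport (g b) := fun z hz =>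
              subset_closure (Function.mem_support.2 (hgpos b z (Metric.mem_ball.1 hz)).ne')
            rw [mem_closure_iff] at ha
            obtain ⟨z, hz1, hz2⟩ := ha _ Metric.isOpen_ball hmemball
            exact hz2 (hballsub hz1)
          simp only [hσdef, hφ'def, Finset.sum_insert hbB, hgb0, zero_add]
        have hmem : ∀ a ∈ tsupport (g b), ∀ s : ℝ, (m:ℝ)/N ≤ s → s ≤ φ' a →
            H' (a, s) ∈ V (yc m b) := by
          intro a ha s hs1 hs2
          exact hkey m b a (Metric.mem_closedBall.1 (hCsub ha)) s hs1 (hs2.trans (hφ'le a))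
        obtain ⟨M', h1, h2, h3⟩ := step_lemma f heq H' hH' φ φ' (fun _ => (m:ℝ)/N)
          hσc hφ'c continuous_const (fun a => by positivity) hβσ hσφ'
          (tsupport (g b)) (isClosed_tsupport _) hout
          (V (yc m b)) (yc m b) (γv (yc m b)) (hγcont _) (hγact _) hmem M hMc hMf
        exact ⟨M', h1, h2, fun p hp => (h3 p hp).trans (hM0 p hp)⟩
    refine Pext (fun x => (m:ℝ)/N + (∑ c ∈ A, g c x) / ((N : ℝ) * S x))
      (fun _ => ((m:ℝ)+1)/N)
      (fun x => ?_) (key A (Finset.Subset.refl A))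
    show (m:ℝ)/N + (∑ c ∈ A, g c x) / ((N : ℝ) * S x) = ((m:ℝ)+1)/N
    have h2 : (∑ c ∈ A, g c x) / ((N:ℝ) * S x) = 1/N := by
      rw [div_eq_div_iff (by have := hS x; positivity) hN.ne', hSdef]; ring
    rw [h2]; ring
  have main : ∀ m : ℕ, P (fun _ => (m:ℝ)/N) := by
    intro m
    induction m with
    | zero =>
      exact Pext (fun _ => (0:ℝ)) (fun _ => ((0:ℕ):ℝ)/N) (fun x => by norm_num) base
    | succ m ih =>
      refine Pext (fun _ => ((m:ℝ)+1)/N) (fun _ => ((m+1 : ℕ):ℝ)/N)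
        (fun x => ?_) (slab m ih)
      push_cast
      ring
  obtain ⟨M, hMc, hMf, hM0⟩ := main N
  refine ⟨⟨fun p => M (p.1, (p.2 : ℝ)),
    hMc.comp (continuous_fst.prodMk (continuous_subtype_val.comp continuous_snd))⟩, ?_, ?_⟩
  · intro a
    exact hM0 (a, ((0:I):ℝ)) (by norm_num)
  · intro p
    have h1 : f (M (p.1, (p.2:ℝ))) = H' (p.1, min ((p.2:I):ℝ) ((N:ℝ)/N)) := hMf (p.1, ↑p.2)
    have h2 : ((N:ℝ))/N = 1 := div_self hN.ne'
    rw [h2] at h1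
    have h3 : min ((p.2:I):ℝ) 1 = ((p.2:I):ℝ) := min_eq_left p.2.2.2
    rw [h3] at h1
    show f (M (p.1, (p.2:ℝ))) = H p
    rw [h1]
    simp only [hH'def]
    rw [projIcc_val]

end MainProof
end

section
/- Suppose given a pullback square of topological spaces with maps $l \colon A \to B$, $r \colon C \to D$, $b \colon D \to B$ and $C \to A$, i.e.\ $C$ is the pullback of $l$ along $b$. If $r$ and $b$ are Serre fibrations and $b$ is surjective, then $l$ is also a Serre fibration. -/
open unitInterval

private lemma continuous_I_mul : Continuous fun p : I × I => p.1 * p.2 := by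
  apply Continuous.subtype_mk (f := fun p : I × I => (p.1 : ℝ) * p.2)
  fun_prop

/-- A surjective Serre fibration admits lifts of arbitrary maps from cubes. -/
private lemma lift_of_surjective {B D : Type*} [TopologicalSpace B] [TopologicalSpace D]
    (b : D → B) (hbsurj : Function.Surjective b) (hbf : IsSerreFibration b)
    (k : ℕ) (F : C((Fin k → I) × I, B)) :
    ∃ G : C((Fin k → I) × I, D), ∀ p, b (G p) = F p := by
  obtain ⟨d₀, hd₀⟩ := hbsurj (F (fun _ => 0, 0))
  -- the contraction homotopy, as a homotopy on a (k+1)-cube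
  have hconsCont : Continuous fun p : (Fin k → I) × I => (Fin.cons p.2 p.1 : Fin (k+1) → I) := by
    apply continuous_pi
    intro i
    refine Fin.cases ?_ (fun j => ?_) i
    · simpa using continuous_snd
    · simpa [Function.comp_def] using (continuous_apply j).comp continuous_fst
  have hscale : Continuous fun p : (Fin (k+1) → I) × I =>
      ((fun i => p.2 * p.1 i.succ, p.2 * p.1 0) : (Fin k → I) × I) := by
    refine Continuous.prodMk (continuous_pi fun i => ?_) ?_
    · exact continuous_I_mul.comp (continuous_snd.prodMk ((continuous_apply i.succ).comp
        continuous_fst))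
    · exact continuous_I_mul.comp (continuous_snd.prodMk ((continuous_apply 0).comp
        continuous_fst))
  set H' : C((Fin (k+1) → I) × I, B) :=
    ⟨fun p => F (fun i => p.2 * p.1 i.succ, p.2 * p.1 0), F.continuous.comp hscale⟩ with hH'
  obtain ⟨L, hL0, hLl⟩ := hbf (k+1) H' ⟨fun _ => d₀, continuous_const⟩ (by
    intro a
    simp only [H', ContinuousMap.coe_mk]
    rw [hd₀]
    congr 1
    simp [zero_mul])
  refine ⟨⟨fun p => L (Fin.cons p.2 p.1, 1), L.continuous.comp
    (hconsCont.prodMk continuous_const)⟩, ?_⟩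
  intro p
  simp only [ContinuousMap.coe_mk]
  rw [hLl]
  simp only [H', ContinuousMap.coe_mk]
  congr 1
  simp [one_mul]

/-- **Lemma 4.17 of the paper**: in a pullback square of topological spaces, with
`C = A ×_B D` the pullback of `l : A → B` along `b : D → B` and `r : C → D` the projection,
if `r` and `b` are Serre fibrations and `b` is surjective, then `l` is a Serre fibration. -/
theorem serreFibration_of_pullback
    {A B D : Type*} [TopologicalSpace A] [TopologicalSpace B] [TopologicalSpace D]
    (l : A → B) (b : D → B) (hl : Continuous l) (hb : Continuous b)
    (hbsurj : Function.Surjective b)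
    (hr : IsSerreFibration fun p : { p : A × D // l p.1 = b p.2 } => p.val.2)
    (hbf : IsSerreFibration b) :
    IsSerreFibration l := by
  intro k H h₀ hcomp
  -- lift H along b
  obtain ⟨G, hG⟩ := lift_of_surjective b hbsurj hbf k H
  -- the initial lift into the pullback
  have hkey : ∀ a, l (h₀ a) = b (G (a, 0)) := fun a => by rw [hcomp, hG]
  set h₀' : C((Fin k → I), { p : A × D // l p.1 = b p.2 }) :=
    ⟨fun a => ⟨(h₀ a, G (a, 0)), hkey a⟩,
      Continuous.subtype_mk (h₀.continuous.prodMk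
        (G.continuous.comp (continuous_id.prodMk continuous_const))) hkey⟩ with hh₀'
  obtain ⟨L', hL'0, hL'r⟩ := hr k G h₀' (fun a => rfl)
  refine ⟨⟨fun p => (L' p).val.1, continuous_fst.comp
    (continuous_subtype_val.comp L'.continuous)⟩, ?_, ?_⟩
  · intro a
    simp only [ContinuousMap.coe_mk]
    rw [hL'0]
    rfl
  · intro p
    simp only [ContinuousMap.coe_mk]
    rw [(L' p).prop]
    have := hL'r p
    simp only at this
    rw [this, hG]
end

section
/- Let $X$ be a topological space with a continuous left action of a topological group $G$ and a continuous right action of a topological group $H$, and assume the two actions commute. Assume the $H$-action is free and that for each $x \in X$ the orbit map $h \mapsto x \cdot h \colon H \to X$ is a topological embedding. If the induced left $G$-action on the quotient $X/H$ is locally retractile, then the quotient map $q \colon X \to X/H$ is a principal $H$-bundle. -/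
/-- The right-orbit relation of a right action `ρ : X → H → X`. -/
def rightOrbitRel {X H : Type*} (ρ : X → H → X) : X → X → Prop :=
  fun x y => ∃ h : H, ρ x h = y

/-- **Proposition 4.6 of the paper**: let `X` carry a continuous left `G`-action and a
continuous right `H`-action which commute; assume the `H`-action is free and each orbit map
`h ↦ ρ x h : H → X` is a topological embedding. If the induced left `G`-action on the
quotient `X/H` is locally retractile, then the quotient map `q : X → X/H` is a principal
`H`-bundle: it is locally trivial with fibre `H`, `H`-equivariantly for the right
multiplication action of `H` on itself. -/
theorem principalBundle_of_locallyRetractile_quotient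
    {G H X : Type*} [Group G] [TopologicalSpace G] [IsTopologicalGroup G]
    [Group H] [TopologicalSpace H] [IsTopologicalGroup H]
    [TopologicalSpace X] [MulAction G X] [ContinuousSMul G X]
    (ρ : X → H → X)
    (hρcont : Continuous fun p : X × H => ρ p.1 p.2)
    (hρone : ∀ x, ρ x 1 = x)
    (hρmul : ∀ x h₁ h₂, ρ (ρ x h₁) h₂ = ρ x (h₁ * h₂))
    (hcommute : ∀ (g : G) (x : X) (h : H), g • ρ x h = ρ (g • x) h)
    (hfree : ∀ (x : X) (h : H), ρ x h = x → h = 1)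
    (hembed : ∀ x : X, Topology.IsEmbedding fun h : H => ρ x h)
    -- the induced `G`-action on `X/H` is locally retractile:
    (hret : ∀ x : X, ∃ (V : Set (Quot (rightOrbitRel ρ))) (γ : V → G),
      IsOpen V ∧ Quot.mk (rightOrbitRel ρ) x ∈ V ∧ Continuous γ ∧
      (∀ hx : Quot.mk (rightOrbitRel ρ) x ∈ V,
        γ ⟨Quot.mk (rightOrbitRel ρ) x, hx⟩ = 1) ∧
      ∀ v : V, Quot.mk (rightOrbitRel ρ) (γ v • x) = (v : Quot (rightOrbitRel ρ))) :
    -- conclusion: `q : X → X/H` is a principal `H`-bundle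
    ∀ b : Quot (rightOrbitRel ρ), ∃ V : Set (Quot (rightOrbitRel ρ)), IsOpen V ∧ b ∈ V ∧
      ∃ e : (Quot.mk (rightOrbitRel ρ) ⁻¹' V) ≃ₜ H × V,
        (∀ p, ((e p).2 : Quot (rightOrbitRel ρ)) = Quot.mk (rightOrbitRel ρ) (p : X)) ∧
        ∀ (p : Quot.mk (rightOrbitRel ρ) ⁻¹' V) (h : H),
          ∃ hm : ρ (p : X) h ∈ Quot.mk (rightOrbitRel ρ) ⁻¹' V,
            e ⟨ρ (p : X) h, hm⟩ = ((e p).1 * h, (e p).2) := by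
  intro b
  obtain ⟨x, rfl⟩ := Quot.exists_rep b
  obtain ⟨V, γ, hVopen, hxV, hγcont, hγone, hγsec⟩ := hret x
  have equiv : Equivalence (rightOrbitRel ρ) := by
    refine ⟨fun a => ⟨1, hρone a⟩, ?_, ?_⟩
    · rintro a c ⟨h, rfl⟩
      exact ⟨h⁻¹, by rw [hρmul, mul_inv_cancel, hρone]⟩
    · rintro a c d ⟨h, rfl⟩ ⟨k, rfl⟩
      exact ⟨h * k, (hρmul a h k).symm⟩
  have mkeq : ∀ a c : X, Quot.mk (rightOrbitRel ρ) a = Quot.mk (rightOrbitRel ρ) c ↔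
      ∃ h, ρ a h = c := fun a c =>
    ⟨fun h => equiv.eqvGen_iff.mp (Quot.eqvGen_exact h), fun hh => Quot.sound (show rightOrbitRel ρ a c from hh)⟩
  refine ⟨V, hVopen, hxV, ?_⟩
  -- the orbit map at `x` as a homeomorphism onto its range
  let E : H ≃ₜ Set.range (fun h : H => ρ x h) :=
    (hembed x).toHomeomorph
  have hEcoe : ∀ h : H, ((E h : X)) = ρ x h := fun h => rfl
  set S : Set X := Quot.mk (rightOrbitRel ρ) ⁻¹' V with hS
  -- projection S → V
  let v : S → V := fun p => ⟨Quot.mk (rightOrbitRel ρ) (p : X), p.2⟩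
  have hvcont : Continuous v :=
    Continuous.subtype_mk ((continuous_quot_mk).comp continuous_subtype_val) _
  -- untranslated point: ψ p lies in the orbit of x
  let ψ : S → X := fun p => (γ (v p))⁻¹ • (p : X)
  have hψcont : Continuous ψ :=
    ((hγcont.comp hvcont).inv).smul continuous_subtype_val
  have hψmem : ∀ p : S, ψ p ∈ Set.range (fun h : H => ρ x h) := by
    intro p
    have h1 : Quot.mk (rightOrbitRel ρ) (γ (v p) • x) = Quot.mk (rightOrbitRel ρ) (p : X) :=
      hγsec (v p)
    obtain ⟨h, hh⟩ := (mkeq _ _).mp h1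
    refine ⟨h, ?_⟩
    show ρ x h = (γ (v p))⁻¹ • (p : X)
    rw [← hh, ← hcommute, inv_smul_smul]
  -- translation function
  let τ : S → H := fun p => E.symm ⟨ψ p, hψmem p⟩
  have hτcont : Continuous τ :=
    E.symm.continuous.comp (hψcont.subtype_mk _)
  have hτspec : ∀ p : S, ρ x (τ p) = ψ p := fun p =>
    congrArg Subtype.val (E.apply_symm_apply ⟨ψ p, hψmem p⟩)
  have hτrec : ∀ p : S, ρ (γ (v p) • x) (τ p) = (p : X) := fun p => by
    rw [← hcommute, hτspec, smul_inv_smul]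
  -- the inverse map
  have hgmem : ∀ (h : H) (w : V), ρ (γ w • x) h ∈ S := by
    intro h w
    show Quot.mk (rightOrbitRel ρ) _ ∈ V
    have : Quot.mk (rightOrbitRel ρ) (ρ (γ w • x) h) = Quot.mk (rightOrbitRel ρ) (γ w • x) :=
      (mkeq _ _).mpr ⟨h⁻¹, by rw [hρmul, mul_inv_cancel, hρone]⟩
    rw [this, hγsec w]; exact w.2
  let g : H × V → S := fun z => ⟨ρ (γ z.2 • x) z.1, hgmem z.1 z.2⟩
  have hgcont : Continuous g := by
    refine Continuous.subtype_mk ?_ _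
    exact hρcont.comp (((hγcont.comp continuous_snd).smul continuous_const).prodMk
      continuous_fst)
  have hvg : ∀ z : H × V, v (g z) = z.2 := by
    rintro ⟨h, w⟩
    apply Subtype.ext
    show Quot.mk (rightOrbitRel ρ) (ρ (γ w • x) h) = (w : Quot (rightOrbitRel ρ))
    rw [← hγsec w]
    exact (mkeq _ _).mpr ⟨h⁻¹, by rw [hρmul, mul_inv_cancel, hρone]⟩
  have hτg : ∀ z : H × V, τ (g z) = z.1 := by
    rintro ⟨h, w⟩
    have hψ : ψ (g (h, w)) = ρ x h := by
      show (γ (v (g (h, w))))⁻¹ • ρ (γ w • x) h = ρ x h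
      rw [hvg (h, w), ← hcommute, inv_smul_smul]
    show E.symm ⟨ψ (g (h, w)), _⟩ = h
    have : (⟨ψ (g (h, w)), hψmem _⟩ : Set.range (fun h : H => ρ x h)) = E h :=
      Subtype.ext (by rw [hEcoe]; exact hψ)
    rw [this, E.symm_apply_apply]
  let e : S ≃ₜ H × V :=
    { toFun := fun p => (τ p, v p)
      invFun := g
      left_inv := fun p => Subtype.ext (hτrec p)
      right_inv := fun z => Prod.ext (hτg z) (hvg z)
      continuous_toFun := hτcont.prodMk hvcont
      continuous_invFun := hgcont }
  refine ⟨e, fun p => rfl, ?_⟩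
  intro p h
  have hmem : ρ (p : X) h ∈ S := by
    show Quot.mk (rightOrbitRel ρ) _ ∈ V
    have : Quot.mk (rightOrbitRel ρ) (ρ (p : X) h) = Quot.mk (rightOrbitRel ρ) (p : X) :=
      (mkeq _ _).mpr ⟨h⁻¹, by rw [hρmul, mul_inv_cancel, hρone]⟩
    rw [this]; exact p.2
  refine ⟨hmem, ?_⟩
  have hveq : v ⟨ρ (p : X) h, hmem⟩ = v p := by
    apply Subtype.ext
    exact (mkeq _ _).mpr ⟨h⁻¹, by rw [hρmul, mul_inv_cancel, hρone]⟩
  have hτeq : τ ⟨ρ (p : X) h, hmem⟩ = τ p * h := by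
    have hψ : ψ ⟨ρ (p : X) h, hmem⟩ = ρ x (τ p * h) := by
      show (γ (v ⟨ρ (p : X) h, hmem⟩))⁻¹ • ρ (p : X) h = ρ x (τ p * h)
      rw [hveq, ← hρmul, hτspec p]
      show _ = ρ ((γ (v p))⁻¹ • (p : X)) h
      rw [← hcommute]
    show E.symm ⟨ψ ⟨ρ (p : X) h, hmem⟩, _⟩ = τ p * h
    have : (⟨ψ ⟨ρ (p : X) h, hmem⟩, hψmem _⟩ : Set.range (fun h : H => ρ x h)) =
        E (τ p * h) := Subtype.ext (by rw [hEcoe]; exact hψ)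
    rw [this, E.symm_apply_apply]
  exact Prod.ext hτeq hveq
end

section
/- Let $f \colon X \to Y$ be a $G$-equivariant map between $G$-spaces which is a Serre fibration, and suppose the quotient map $Y \to Y/G$ is a principal $G$-bundle. Then the induced map of orbit spaces $\bar{f} \colon X/G \to Y/G$ is also a Serre fibration. -/
open unitInterval

theorem glueCO {T E' : Type*} [TopologicalSpace T] [TopologicalSpace E']
    {A B : Set T} {h f g : T → E'} (hA : IsClosed A) (hB : IsClosed B)
    (hhf : Set.EqOn h f A) (hhg : Set.EqOn h g B)
    (hf : ContinuousOn f A) (hg : ContinuousOn g B) :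
    ContinuousOn h (A ∪ B) := by
  intro x hx
  apply ContinuousWithinAt.union
  · by_cases hxA : x ∈ A
    · exact ((hf x hxA).congr hhf (hhf hxA))
    · exact continuousWithinAt_of_notMem_closure (by rwa [hA.closure_eq])
  · by_cases hxB : x ∈ B
    · exact ((hg x hxB).congr hhg (hhg hxB))
    · exact continuousWithinAt_of_notMem_closure (by rwa [hB.closure_eq])

theorem contInf' {ι T : Type*} [TopologicalSpace T] (s : Finset ι) (hs : s.Nonempty)
    (f : ι → T → ℝ) (hf : ∀ i, Continuous (f i)) :
    Continuous fun x => s.inf' hs (fun i => f i x) := by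
  induction hs using Finset.Nonempty.cons_induction with
  | singleton i => simpa using hf i
  | cons i s his hs ih =>
    have h2 : (fun x => (Finset.cons i s his).inf' (Finset.cons_nonempty his) (fun j => f j x))
        = fun x => min (f i x) (s.inf' hs (fun j => f j x)) := by
      funext x
      rw [Finset.inf'_cons]
    rw [h2]
    exact (hf i).min ih

/-- Local trivialization data for a `G`-invariant map `q : E → B`. -/
structure ChartData (G E B : Type*) [Group G] [TopologicalSpace G] [TopologicalSpace E]
    [TopologicalSpace B] [MulAction G E] (q : E → B) where
  W : Set B
  open_W : IsOpen W
  sig : W → E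
  tau : {p : E // q p ∈ W} → G
  cont_sig : Continuous sig
  cont_tau : Continuous tau
  sec : ∀ w : W, q (sig w) = (w : B)
  triv : ∀ p : {p : E // q p ∈ W}, tau p • sig ⟨q p.1, p.2⟩ = p.1
  equivar : ∀ (g : G) (p : {p : E // q p ∈ W}) (hg : q (g • p.1) ∈ W),
      tau ⟨g • p.1, hg⟩ = g * tau p

theorem bundle_lift {G E B : Type*} [Group G] [TopologicalSpace G] [TopologicalSpace E]
    [TopologicalSpace B] [MulAction G E] [ContinuousSMul G E]
    (q : E → B) (hq : ∀ (g : G) (p : E), q (g • p) = q p)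
    (charts : ∀ b : B, ∃ c : ChartData G E B q, b ∈ c.W)
    (n : ℕ) (H : C((Fin n → I), B)) :
    ∃ L : C((Fin n → I), E), ∀ x, q (L x) = H x := by
  classical
  choose chart hchart using charts
  have e₀ : E := (chart (H (fun _ => 0))).sig ⟨H (fun _ => 0), hchart _⟩
  have hcover : (Set.univ : Set (Fin n → I)) ⊆ ⋃ b : B, H ⁻¹' (chart b).W := fun x _ =>
    Set.mem_iUnion.mpr ⟨H x, hchart (H x)⟩
  obtain ⟨δ, hδ, hball⟩ := lebesgue_number_lemma_of_metric isCompact_univ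
      (fun b => (chart b).open_W.preimage H.continuous) hcover
  obtain ⟨N₀, hN₀⟩ := exists_nat_one_div_lt hδ
  set N : ℕ := N₀ + 1 with hN
  have hNpos : (0:ℝ) < N := by positivity
  have hNR : 1 / (N:ℝ) < δ := by
    rw [hN]; push_cast; exact hN₀
  set cube : (Fin n → Fin N) → Set (Fin n → I) := fun m =>
    {x | ∀ i, ((m i : ℕ) : ℝ) / N ≤ (x i : ℝ) ∧ (x i : ℝ) ≤ (((m i : ℕ) : ℝ) + 1) / N}
    with hcube
  have cube_closed : ∀ m, IsClosed (cube m) := by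
    intro m
    have heq : cube m = ⋂ i, (fun x : Fin n → I => (x i : ℝ)) ⁻¹'
        Set.Icc (((m i : ℕ) : ℝ) / N) ((((m i : ℕ) : ℝ) + 1) / N) := by
      ext x; simp [hcube, Set.mem_iInter, Set.mem_Icc]
    rw [heq]
    exact isClosed_iInter fun i =>
      IsClosed.preimage (continuous_subtype_val.comp (continuous_apply i)) isClosed_Icc
  have cube_chart : ∀ m : Fin n → Fin N, ∃ b, ∀ x ∈ cube m, H x ∈ (chart b).W := by
    intro m
    have hmem : ∀ i : Fin n, ((m i : ℕ) : ℝ) / N ∈ Set.Icc (0:ℝ) 1 := by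
      intro i
      constructor
      · positivity
      · rw [div_le_one hNpos]
        exact_mod_cast (m i).2.le
    obtain ⟨b, hb⟩ := hball (fun i => ⟨_, hmem i⟩) (Set.mem_univ _)
    refine ⟨b, fun x hx => ?_⟩
    apply hb
    rw [Metric.mem_ball, dist_pi_lt_iff hδ]
    intro i
    rw [Subtype.dist_eq, Real.dist_eq, abs_sub_lt_iff]
    have h1 := (hx i).1
    have h2 := (hx i).2
    have h3 : (x i : ℝ) ≤ ((m i:ℕ):ℝ)/N + 1/N := by
      rw [← add_div]; exact h2
    constructor <;> simp only [] <;> linarith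
  choose bm hbm using cube_chart
  have cube_cover : ∀ x : Fin n → I, ∃ m, x ∈ cube m := by
    intro x
    have hNN : N - 1 < N := by omega
    refine ⟨fun i => ⟨min (N-1) ⌊(x i : ℝ) * N⌋₊, lt_of_le_of_lt (min_le_left _ _) hNN⟩, ?_⟩
    intro i
    have hx0 : (0:ℝ) ≤ (x i : ℝ) := (x i).2.1
    have hx1 : (x i : ℝ) ≤ 1 := (x i).2.2
    simp only [hcube, Set.mem_setOf_eq]
    by_cases hc : ⌊(x i : ℝ) * N⌋₊ ≤ N - 1
    · rw [min_eq_right hc]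
      constructor
      · rw [div_le_iff₀ hNpos]
        exact Nat.floor_le (by positivity)
      · rw [le_div_iff₀ hNpos]
        have := Nat.lt_floor_add_one ((x i : ℝ) * N)
        linarith
    · push_neg at hc
      rw [min_eq_left (by omega)]
      have hfl : (N:ℝ) ≤ ⌊(x i:ℝ) * N⌋₊ := by exact_mod_cast (by omega : N ≤ ⌊(x i:ℝ) * N⌋₊)
      have h2 : (N:ℝ) ≤ (x i:ℝ) * N := le_trans hfl (Nat.floor_le (by positivity))
      have hx1' : (1:ℝ) ≤ (x i : ℝ) := by nlinarith
      have hcast : ((N - 1 : ℕ) : ℝ) = (N:ℝ) - 1 := by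
        push_cast [Nat.cast_sub (by omega : 1 ≤ N)]; ring
      constructor
      · rw [div_le_iff₀ hNpos, hcast]
        nlinarith
      · rw [le_div_iff₀ hNpos, hcast]
        nlinarith
  set dec : (Fin n → Fin N) → Fin n → (Fin n → Fin N) :=
    fun m i => Function.update m i ⟨(m i : ℕ) - 1, lt_of_le_of_lt (Nat.sub_le _ _) (m i).2⟩
    with hdec
  have sum_dec_lt : ∀ m i, (m i : ℕ) ≠ 0 → ∑ j, ((dec m i) j : ℕ) < ∑ j, (m j : ℕ) := by
    intro m i h
    apply Finset.sum_lt_sum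
    · intro j _
      rcases eq_or_ne j i with rfl | hji
      · simp only [hdec, Function.update_self]
        omega
      · simp [hdec, Function.update_of_ne hji]
    · refine ⟨i, Finset.mem_univ i, ?_⟩
      simp only [hdec, Function.update_self]
      omega
  have mem_dec : ∀ m i, (m i:ℕ) ≠ 0 → ∀ x ∈ cube m, (x i : ℝ) = ((m i:ℕ):ℝ)/N →
      x ∈ cube (dec m i) := by
    intro m i h x hx hxi j
    rcases eq_or_ne j i with rfl | hji
    · simp only [hdec, Function.update_self]
      have hc1 : (((m j : ℕ) - 1 : ℕ) : ℝ) ≤ ((m j : ℕ) : ℝ) := by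
        exact_mod_cast Nat.sub_le _ _
      have hc2 : (((m j : ℕ) - 1 : ℕ) : ℝ) + 1 = ((m j : ℕ) : ℝ) := by
        have : ((m j : ℕ) - 1 : ℕ) + 1 = (m j : ℕ) := by omega
        exact_mod_cast congrArg (Nat.cast : ℕ → ℝ) this
      constructor
      · rw [hxi]
        exact (div_le_div_iff_of_pos_right hNpos).mpr hc1
      · rw [hxi, hc2]
    · simp only [hdec, Function.update_of_ne hji]
      exact hx j
  have key : ∀ S : Finset (Fin n → Fin N),
      (∀ m ∈ S, ∀ i, (m i : ℕ) ≠ 0 → dec m i ∈ S) →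
      ∃ L : (Fin n → I) → E, ContinuousOn L (⋃ m ∈ S, cube m) ∧
        ∀ x ∈ ⋃ m ∈ S, cube m, q (L x) = H x := by
    intro S
    induction S using Finset.strongInduction with
    | _ S ih =>
    intro hdown
    rcases S.eq_empty_or_nonempty with rfl | hSne
    · exact ⟨fun _ => e₀, by simp, by simp⟩
    obtain ⟨m, hmS, hmax⟩ := Finset.exists_max_image S (fun m => ∑ j, (m j : ℕ)) hSne
    have hdown' : ∀ m' ∈ S.erase m, ∀ i, (m' i : ℕ) ≠ 0 → dec m' i ∈ S.erase m := by
      intro m' hm' i hi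
      have h1 : dec m' i ∈ S := hdown m' (Finset.mem_of_mem_erase hm') i hi
      refine Finset.mem_erase.mpr ⟨fun hcontra => ?_, h1⟩
      have h2 := sum_dec_lt m' i hi
      rw [hcontra] at h2
      have h3 := hmax m' (Finset.mem_of_mem_erase hm')
      omega
    obtain ⟨L', hL'c, hL'q⟩ := ih (S.erase m) (Finset.erase_ssubset hmS) hdown'
    set K' : Set (Fin n → I) := ⋃ m' ∈ S.erase m, cube m' with hK'
    have hK'closed : IsClosed K' := by
      rw [hK']
      exact Set.Finite.isClosed_biUnion (Set.finite_mem_finset (S.erase m))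
        (fun m' _ => cube_closed m')
    have claim1 : ∀ x ∈ cube m, x ∈ K' →
        ∃ i, (m i:ℕ) ≠ 0 ∧ (x i : ℝ) = ((m i:ℕ):ℝ)/N := by
      intro x hx hxK
      obtain ⟨m'', hm''mem, hxm''⟩ := Set.mem_iUnion₂.mp hxK
      have hne : m'' ≠ m := (Finset.mem_erase.mp hm''mem).1
      have hm''S : m'' ∈ S := Finset.mem_of_mem_erase hm''mem
      have hex : ∃ i, (m'' i : ℕ) < (m i : ℕ) := by
        by_contra hcon
        push_neg at hcon
        have hlt : ∑ j, (m j :ℕ) < ∑ j, (m'' j : ℕ) := by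
          apply Finset.sum_lt_sum (fun j _ => hcon j)
          obtain ⟨j, hj⟩ := Function.ne_iff.mp hne
          exact ⟨j, Finset.mem_univ j,
            lt_of_le_of_ne (hcon j) (fun h => hj (Fin.ext h.symm))⟩
        have := hmax m'' hm''S
        omega
      obtain ⟨i, hilt⟩ := hex
      refine ⟨i, by omega, ?_⟩
      have h1 := (hx i).1
      have h2 := (hxm'' i).2
      have hcst : ((m'' i:ℕ):ℝ) + 1 ≤ ((m i:ℕ):ℝ) := by exact_mod_cast hilt
      have h3 : (x i:ℝ) ≤ ((m i:ℕ):ℝ)/N := by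
        refine le_trans h2 ?_
        exact (div_le_div_iff_of_pos_right hNpos).mpr hcst
      linarith
    have claim2 : ∀ x ∈ cube m, (∃ i, (m i:ℕ) ≠ 0 ∧ (x i:ℝ) = ((m i:ℕ):ℝ)/N) → x ∈ K' := by
      rintro x hx ⟨i, hi, hxi⟩
      have hdm : dec m i ∈ S.erase m := by
        refine Finset.mem_erase.mpr ⟨fun hcontra => ?_, hdown m hmS i hi⟩
        have h2 := sum_dec_lt m i hi
        rw [hcontra] at h2
        omega
      exact Set.mem_iUnion₂.mpr ⟨dec m i, hdm, mem_dec m i hi x hx hxi⟩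
    have hKS : (⋃ m' ∈ S, cube m') = cube m ∪ K' := by
      conv_lhs => rw [← Finset.insert_erase hmS]
      rw [Finset.set_biUnion_insert]
    set c := chart (bm m) with hc
    have hHW : ∀ x ∈ cube m, H x ∈ c.W := hbm m
    by_cases hm0 : ∃ i, (m i : ℕ) ≠ 0
    · -- case A : retraction onto the union of lower faces
      set SF : Finset (Fin n) := Finset.univ.filter (fun i => (m i : ℕ) ≠ 0) with hSF
      have hSFne : SF.Nonempty := by
        obtain ⟨i, hi⟩ := hm0
        exact ⟨i, Finset.mem_filter.mpr ⟨Finset.mem_univ _, hi⟩⟩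
      set t : (Fin n → I) → ℝ :=
        fun x => SF.inf' hSFne (fun i => (x i : ℝ) - ((m i:ℕ):ℝ)/N) with ht
      have cont_t : Continuous t := contInf' SF hSFne _ (fun i =>
        (continuous_subtype_val.comp (continuous_apply i)).sub continuous_const)
      have t_nonneg : ∀ x ∈ cube m, 0 ≤ t x := by
        intro x hx
        apply Finset.le_inf'
        intro i _
        have := (hx i).1
        linarith
      have t_le : ∀ (x : Fin n → I), ∀ i ∈ SF, t x ≤ (x i : ℝ) - ((m i:ℕ):ℝ)/N :=
        fun x i hi => Finset.inf'_le _ hi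
      have hr_mem : ∀ x ∈ cube m, ∀ i ∈ SF, (x i : ℝ) - t x ∈ Set.Icc (0:ℝ) 1 := by
        intro x hx i hi
        constructor
        · have h1 := t_le x i hi
          have h2 : 0 ≤ ((m i:ℕ):ℝ)/N := by positivity
          linarith
        · have h3 := t_nonneg x hx
          have h4 := (x i).2.2
          linarith
      set r : (Fin n → I) → (Fin n → I) := fun x i =>
        if (m i : ℕ) ≠ 0 then Set.projIcc (0:ℝ) 1 zero_le_one ((x i : ℝ) - t x) else x i
        with hr
      have cont_r : Continuous r := by
        apply continuous_pi
        intro i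
        by_cases hi : (m i : ℕ) ≠ 0
        · simp only [hr, if_pos hi]
          exact continuous_projIcc.comp
            ((continuous_subtype_val.comp (continuous_apply i)).sub cont_t)
        · simp only [hr, if_neg hi]
          exact continuous_apply i
      have r_coord : ∀ x ∈ cube m, ∀ i ∈ SF, ((r x i : ℝ)) = (x i : ℝ) - t x := by
        intro x hx i hi
        have hiS : (m i : ℕ) ≠ 0 := by simpa [hSF] using hi
        simp only [hr, if_pos hiS]
        rw [Set.projIcc_of_mem _ (hr_mem x hx i hi)]
      have r_mem_cube : ∀ x ∈ cube m, r x ∈ cube m := by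
        intro x hx i
        by_cases hi : (m i :ℕ) ≠ 0
        · have hiSF : i ∈ SF := Finset.mem_filter.mpr ⟨Finset.mem_univ _, hi⟩
          constructor
          · rw [r_coord x hx i hiSF]
            have := t_le x i hiSF
            linarith
          · rw [r_coord x hx i hiSF]
            have h0 := t_nonneg x hx
            have := (hx i).2
            linarith
        · have hre : r x i = x i := by simp only [hr, if_neg hi]
          rw [hre]
          exact hx i
      have r_flow : ∀ x ∈ cube m, ∃ i, (m i : ℕ) ≠ 0 ∧ ((r x i : ℝ)) = ((m i:ℕ):ℝ)/N := by
        intro x hx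
        obtain ⟨i, hiSF, hieq⟩ :=
          Finset.exists_mem_eq_inf' hSFne (fun i => (x i : ℝ) - ((m i:ℕ):ℝ)/N)
        refine ⟨i, by simpa [hSF] using hiSF, ?_⟩
        have htx : t x = (x i : ℝ) - ((m i:ℕ):ℝ)/N := hieq
        rw [r_coord x hx i hiSF, htx]
        ring
      have r_fix : ∀ x ∈ cube m,
          (∃ i, (m i : ℕ) ≠ 0 ∧ (x i : ℝ) = ((m i:ℕ):ℝ)/N) → r x = x := by
        rintro x hx ⟨i₁, hi₁, hxi₁⟩
        have hi₁SF : i₁ ∈ SF := Finset.mem_filter.mpr ⟨Finset.mem_univ _, hi₁⟩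
        have ht0 : t x = 0 := by
          have h1 := t_le x i₁ hi₁SF
          rw [hxi₁] at h1
          have h2 := t_nonneg x hx
          linarith
        funext j
        by_cases hj : (m j : ℕ) ≠ 0
        · apply Subtype.ext
          rw [r_coord x hx j (Finset.mem_filter.mpr ⟨Finset.mem_univ _, hj⟩), ht0]
          ring
        · simp only [hr, if_neg hj]
      have hrK' : ∀ x ∈ cube m, r x ∈ K' :=
        fun x hx => claim2 _ (r_mem_cube x hx) (r_flow x hx)
      have hqL' : ∀ x, ∀ hx : x ∈ cube m, q (L' (r x)) ∈ c.W := by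
        intro x hx
        rw [hL'q _ (hrK' x hx)]
        exact hHW _ (r_mem_cube x hx)
      set Lnew : (Fin n → I) → E := fun x =>
        if hx : x ∈ cube m then
          c.tau ⟨L' (r x), hqL' x hx⟩ • c.sig ⟨H x, hHW x hx⟩
        else L' x with hLnew
      have heqint : ∀ x, x ∈ cube m → x ∈ K' → Lnew x = L' x := by
        intro x hxC hxK
        have hflow := claim1 x hxC hxK
        have hrx : r x = x := r_fix x hxC hflow
        have hqx : q (L' x) ∈ c.W := by
          rw [hL'q _ hxK]
          exact hHW _ hxC
        have h1 : Lnew x = c.tau ⟨L' x, hqx⟩ • c.sig ⟨H x, hHW x hxC⟩ := by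
          rw [hLnew]
          simp only [dif_pos hxC]
          congr 2
          exact Subtype.ext (congrArg L' hrx)
        have hsub : (⟨q (L' x), hqx⟩ : {b : B // b ∈ c.W}) = ⟨H x, hHW x hxC⟩ :=
          Subtype.ext (hL'q _ hxK)
        rw [h1, ← hsub]
        exact c.triv ⟨L' x, hqx⟩
      have hcontC : ContinuousOn Lnew (cube m) := by
        rw [continuousOn_iff_continuous_restrict]
        have hres : Set.domRestrict (cube m) Lnew = fun x : (cube m) =>
            c.tau ⟨L' (r x.1), hqL' x.1 x.2⟩ • c.sig ⟨H x.1, hHW x.1 x.2⟩ := by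
          funext x
          simp only [Set.domRestrict_apply, hLnew, dif_pos x.2]
        rw [hres]
        apply Continuous.smul
        · apply c.cont_tau.comp
          apply Continuous.subtype_mk
          exact hL'c.comp_continuous (cont_r.comp continuous_subtype_val)
            (fun x => hrK' x.1 x.2)
        · exact c.cont_sig.comp
            (Continuous.subtype_mk (H.continuous.comp continuous_subtype_val) _)
      refine ⟨Lnew, ?_, ?_⟩
      · rw [hKS, Set.union_comm]
        refine glueCO hK'closed (cube_closed m) ?_ (fun x hx => rfl) hL'c hcontC
        intro x hxK
        by_cases hxC : x ∈ cube m
        · exact heqint x hxC hxK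
        · simp only [hLnew, dif_neg hxC]
      · intro x hx
        rw [hKS] at hx
        by_cases hxC : x ∈ cube m
        · have : Lnew x = c.tau ⟨L' (r x), hqL' x hxC⟩ • c.sig ⟨H x, hHW x hxC⟩ := by
            simp only [hLnew, dif_pos hxC]
          rw [this, hq, c.sec ⟨H x, hHW x hxC⟩]
        · rcases hx with hx | hxK
          · exact absurd hx hxC
          · have : Lnew x = L' x := by simp only [hLnew, dif_neg hxC]
            rw [this]
            exact hL'q x hxK
    · -- case B : m = 0, the new cube is disjoint from the previous ones
      push_neg at hm0
      set Lnew : (Fin n → I) → E := fun x =>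
        if hx : x ∈ cube m then c.sig ⟨H x, hHW x hx⟩ else L' x with hLnew
      have hdisj : ∀ x, x ∈ cube m → x ∈ K' → False := by
        intro x hxC hxK
        obtain ⟨i, hi, _⟩ := claim1 x hxC hxK
        exact hi (hm0 i)
      have hcontC : ContinuousOn Lnew (cube m) := by
        rw [continuousOn_iff_continuous_restrict]
        have hres : Set.domRestrict (cube m) Lnew = fun x : (cube m) =>
            c.sig ⟨H x.1, hHW x.1 x.2⟩ := by
          funext x
          simp only [Set.domRestrict_apply, hLnew, dif_pos x.2]
        rw [hres]
        exact c.cont_sig.comp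
          (Continuous.subtype_mk (H.continuous.comp continuous_subtype_val) _)
      refine ⟨Lnew, ?_, ?_⟩
      · rw [hKS, Set.union_comm]
        refine glueCO hK'closed (cube_closed m) ?_ (fun x hx => rfl) hL'c hcontC
        intro x hxK
        by_cases hxC : x ∈ cube m
        · exact absurd hxK (fun h => hdisj x hxC h)
        · simp only [hLnew, dif_neg hxC]
      · intro x hx
        rw [hKS] at hx
        by_cases hxC : x ∈ cube m
        · have : Lnew x = c.sig ⟨H x, hHW x hxC⟩ := by
            simp only [hLnew, dif_pos hxC]
          rw [this, c.sec ⟨H x, hHW x hxC⟩]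
        · rcases hx with hx | hxK
          · exact absurd hx hxC
          · have : Lnew x = L' x := by simp only [hLnew, dif_neg hxC]
            rw [this]
            exact hL'q x hxK
  obtain ⟨L, hLc, hLq⟩ := key Finset.univ (fun m _ i _ => Finset.mem_univ _)
  have huniv : (⋃ m' ∈ (Finset.univ : Finset (Fin n → Fin N)), cube m') = Set.univ := by
    apply Set.eq_univ_of_forall
    intro x
    obtain ⟨m, hm⟩ := cube_cover x
    exact Set.mem_iUnion₂.mpr ⟨m, Finset.mem_univ m, hm⟩
  rw [huniv] at hLc hLq
  exact ⟨⟨L, continuousOn_univ.mp hLc⟩, fun x => hLq x (Set.mem_univ x)⟩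

theorem chart_div {G E B : Type*} [Group G] [TopologicalSpace G] [TopologicalSpace E]
    [TopologicalSpace B] [MulAction G E]
    {q : E → B} (c : ChartData G E B q)
    {p p' : E} (hp : q p ∈ c.W) (hp' : q p' ∈ c.W) (hpp : q p = q p') :
    (c.tau ⟨p, hp⟩ * (c.tau ⟨p', hp'⟩)⁻¹) • p' = p := by
  have h1 : c.tau ⟨p', hp'⟩ • c.sig ⟨q p', hp'⟩ = p' := c.triv ⟨p', hp'⟩
  have h2 : c.tau ⟨p, hp⟩ • c.sig ⟨q p, hp⟩ = p := c.triv ⟨p, hp⟩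
  have h3 : (c.tau ⟨p', hp'⟩)⁻¹ • p' = c.sig ⟨q p', hp'⟩ := by
    rw [inv_smul_eq_iff]
    exact h1.symm
  have h4 : (⟨q p', hp'⟩ : {b : B // b ∈ c.W}) = ⟨q p, hp⟩ := Subtype.ext hpp.symm
  rw [mul_smul, h3, h4]
  exact h2

theorem chart_div_unique {G E B : Type*} [Group G] [TopologicalSpace G] [TopologicalSpace E]
    [TopologicalSpace B] [MulAction G E]
    {q : E → B} (hq : ∀ (g : G) (p : E), q (g • p) = q p) (c : ChartData G E B q)
    {p p' : E} {g : G} (hp : q p ∈ c.W) (hp' : q p' ∈ c.W) (hg : g • p' = p) :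
    g = c.tau ⟨p, hp⟩ * (c.tau ⟨p', hp'⟩)⁻¹ := by
  have hgm : q (g • p') ∈ c.W := by rw [hq]; exact hp'
  have h5 := c.equivar g ⟨p', hp'⟩ hgm
  have h6 : (⟨g • p', hgm⟩ : {p : E // q p ∈ c.W}) = ⟨p, hp⟩ := Subtype.ext hg
  rw [h6] at h5
  rw [h5, mul_inv_cancel_right]

theorem bundle_hlp {G E B : Type*} [Group G] [TopologicalSpace G] [IsTopologicalGroup G]
    [TopologicalSpace E] [TopologicalSpace B] [MulAction G E] [ContinuousSMul G E]
    (q : E → B) (hq : ∀ (g : G) (p : E), q (g • p) = q p)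
    (charts : ∀ b : B, ∃ c : ChartData G E B q, b ∈ c.W) :
    IsSerreFibration q := by
  intro k H h₀ hcomp
  let φ : ((Fin k → I) × I) ≃ₜ (Fin (k+1) → I) :=
    ((Homeomorph.refl (Fin k → I)).prodCongr (Homeomorph.funUnique (Fin 1) I).symm).trans
      (Fin.appendHomeomorph k 1)
  obtain ⟨Lc, hLc⟩ := bundle_lift q hq charts (k+1)
    (H.comp ⟨φ.symm, φ.symm.continuous⟩)
  set Ht : (Fin k → I) × I → E := fun p => Lc (φ p) with hHt
  have cont_Ht : Continuous Ht := Lc.continuous.comp φ.continuous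
  have hHtq : ∀ p, q (Ht p) = H p := by
    intro p
    rw [hHt]
    have h2 := hLc (φ p)
    simpa using h2
  have fiber : ∀ a, q (h₀ a) = q (Ht (a, 0)) := by
    intro a
    rw [hHtq, hcomp a]
  have hdiv : ∀ a : Fin k → I, ∃ g : G, g • Ht (a,0) = h₀ a := by
    intro a
    obtain ⟨c, hcW⟩ := charts (q (h₀ a))
    have hp' : q (Ht (a,0)) ∈ c.W := by rw [← fiber a]; exact hcW
    exact ⟨_, chart_div c hcW hp' (fiber a)⟩
  choose γ hγ using hdiv
  have cont_γ : Continuous γ := by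
    rw [continuous_iff_continuousAt]
    intro a
    obtain ⟨c, hcW⟩ := charts (q (h₀ a))
    set O : Set (Fin k → I) := (fun b => H (b, 0)) ⁻¹' c.W with hO
    have hOopen : IsOpen O :=
      c.open_W.preimage (H.continuous.comp (continuous_id.prodMk continuous_const))
    have haO : a ∈ O := by
      show H (a, 0) ∈ c.W
      rw [← hcomp a]
      exact hcW
    have hmem1 : ∀ b : (Fin k → I), b ∈ O → q (h₀ b) ∈ c.W := by
      intro b hb
      rw [hcomp b]
      exact hb
    have hmem2 : ∀ b : (Fin k → I), b ∈ O → q (Ht (b, 0)) ∈ c.W := by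
      intro b hb
      rw [hHtq]
      exact hb
    have hcont : ContinuousOn γ O := by
      rw [continuousOn_iff_continuous_restrict]
      have hres : Set.domRestrict O γ = fun b : O =>
          c.tau ⟨h₀ b.1, hmem1 b.1 b.2⟩ * (c.tau ⟨Ht (b.1, 0), hmem2 b.1 b.2⟩)⁻¹ := by
        funext b
        exact chart_div_unique hq c (hmem1 b.1 b.2) (hmem2 b.1 b.2) (hγ b.1)
      rw [hres]
      apply Continuous.mul
      · apply c.cont_tau.comp
        apply Continuous.subtype_mk
        exact h₀.continuous.comp continuous_subtype_val
      · apply Continuous.inv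
        apply c.cont_tau.comp
        apply Continuous.subtype_mk
        exact cont_Ht.comp ((continuous_subtype_val).prodMk continuous_const)
    exact hcont.continuousAt (hOopen.mem_nhds haO)
  refine ⟨⟨fun p => γ p.1 • Ht p, (cont_γ.comp continuous_fst).smul cont_Ht⟩, ?_, ?_⟩
  · intro a
    exact hγ a
  · intro p
    show q (γ p.1 • Ht p) = H p
    rw [hq, hHtq]

/-- **Corollary 4.18 of the paper**: let `f : X → Y` be a `G`-equivariant Serre fibration
between `G`-spaces, and assume the quotient map `Y → Y/G` is a principal `G`-bundle (locally
trivial with fibre `G`, equivariantly). Then the induced map of orbit spaces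
`f̄ : X/G → Y/G` is also a Serre fibration. -/
theorem serreFibration_orbitSpaces
    {G X Y : Type*} [Group G] [TopologicalSpace G] [IsTopologicalGroup G]
    [TopologicalSpace X] [TopologicalSpace Y]
    [MulAction G X] [MulAction G Y] [ContinuousSMul G X] [ContinuousSMul G Y]
    (f : X → Y) (hf : Continuous f)
    (heq : ∀ (g : G) (x : X), f (g • x) = g • f x)
    (hSerre : IsSerreFibration f)
    -- `Y → Y/G` is a principal `G`-bundle:
    (hprin : ∀ b : Quotient (MulAction.orbitRel G Y),
      ∃ V : Set (Quotient (MulAction.orbitRel G Y)), IsOpen V ∧ b ∈ V ∧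
      ∃ e : ((Quotient.mk (MulAction.orbitRel G Y)) ⁻¹' V) ≃ₜ G × V,
        (∀ p, ((e p).2 : Quotient (MulAction.orbitRel G Y))
            = Quotient.mk (MulAction.orbitRel G Y) (p : Y)) ∧
        ∀ (p : (Quotient.mk (MulAction.orbitRel G Y)) ⁻¹' V) (g : G),
          ∃ hm : g • (p : Y) ∈ (Quotient.mk (MulAction.orbitRel G Y)) ⁻¹' V,
            e ⟨g • (p : Y), hm⟩ = (g * (e p).1, (e p).2))
    -- `f̄ : X/G → Y/G` is the induced map on orbit spaces:
    (fbar : Quotient (MulAction.orbitRel G X) → Quotient (MulAction.orbitRel G Y))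
    (hfbar : ∀ x : X, fbar (Quotient.mk (MulAction.orbitRel G X) x)
      = Quotient.mk (MulAction.orbitRel G Y) (f x)) :
    IsSerreFibration fbar := by
  classical
  set Qx : X → Quotient (MulAction.orbitRel G X) := Quotient.mk (MulAction.orbitRel G X)
    with hQx
  set Qy : Y → Quotient (MulAction.orbitRel G Y) := Quotient.mk (MulAction.orbitRel G Y)
    with hQy
  have cQx : Continuous Qx := continuous_quot_mk
  have cQy : Continuous Qy := continuous_quot_mk
  have hqX : ∀ (g : G) (x : X), Qx (g • x) = Qx x := fun g x =>
    Quotient.sound (MulAction.mem_orbit x g)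
  have hqY : ∀ (g : G) (y : Y), Qy (g • y) = Qy y := fun g y =>
    Quotient.sound (MulAction.mem_orbit y g)
  have openQx : IsOpenMap Qx := MulAction.isOpenQuotientMap_quotientMk.isOpenMap
  have out_relX : ∀ x : X, ∃ g : G, g • x = (Qx x).out := by
    intro x
    have h := Quotient.mk_out (s := MulAction.orbitRel G X) x
    rw [MulAction.orbitRel_apply] at h
    exact MulAction.mem_orbit_iff.mp h
  have cfbar : Continuous fbar := by
    rw [MulAction.isOpenQuotientMap_quotientMk.isQuotientMap.continuous_iff]
    have h : fbar ∘ Qx = fun x => Qy (f x) := funext fun x => hfbar x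
    exact h ▸ (cQy.comp hf)
  -- charts for Y → Y/G
  have chartsY : ∀ b, ∃ c : ChartData G Y (Quotient (MulAction.orbitRel G Y)) Qy,
      b ∈ c.W := by
    intro b
    obtain ⟨V, hVopen, hbV, e, he2, heg⟩ := hprin b
    refine ⟨⟨V, hVopen,
      fun v => (e.symm (1, v) : Y),
      fun p => (e ⟨p.1, p.2⟩).1,
      ?_, ?_, ?_, ?_, ?_⟩, hbV⟩
    · exact continuous_subtype_val.comp
        (e.symm.continuous.comp (continuous_const.prodMk continuous_id))
    · exact continuous_fst.comp
        (e.continuous.comp (Continuous.subtype_mk continuous_subtype_val _))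
    · intro w
      have h := he2 (e.symm (1, w))
      rw [e.apply_symm_apply] at h
      exact h.symm
    · intro p
      obtain ⟨hm, hme⟩ := heg (e.symm (1, (⟨Qy p.1, p.2⟩ : V))) ((e ⟨p.1, p.2⟩).1)
      rw [e.apply_symm_apply] at hme
      have hw : (e ⟨p.1, p.2⟩).2 = (⟨Qy p.1, p.2⟩ : V) := Subtype.ext (he2 ⟨p.1, p.2⟩)
      have h2 : e ⟨(e ⟨p.1, p.2⟩).1 • (e.symm (1, (⟨Qy p.1, p.2⟩ : V)) : Y), hm⟩
          = e ⟨p.1, p.2⟩ := by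
        rw [hme, mul_one]
        exact Prod.ext rfl hw.symm
      exact congrArg Subtype.val (e.injective h2)
    · intro g p hg
      obtain ⟨hm, hme⟩ := heg ⟨p.1, p.2⟩ g
      exact congrArg Prod.fst hme
  -- charts for X → X/G
  have chartsX : ∀ b, ∃ c : ChartData G X (Quotient (MulAction.orbitRel G X)) Qx,
      b ∈ c.W := by
    intro b
    obtain ⟨V, hVopen, hbV, e, he2, heg⟩ := hprin (fbar b)
    have hWopen : IsOpen (fbar ⁻¹' V) := hVopen.preimage cfbar
    have hmemf : ∀ p : {x : X // Qx x ∈ fbar ⁻¹' V}, f p.1 ∈ Qy ⁻¹' V := by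
      intro p
      show Qy (f p.1) ∈ V
      rw [← hfbar p.1]
      exact p.2
    have houtmem : ∀ u : (fbar ⁻¹' V : Set _), f ((u.1).out) ∈ Qy ⁻¹' V := by
      intro u
      show Qy (f u.1.out) ∈ V
      rw [← hfbar u.1.out, hQx, Quotient.out_eq u.1]
      exact u.2
    have sval : ∀ (x : X) (hx : f x ∈ Qy ⁻¹' V) (g : G) (hgx : f (g • x) ∈ Qy ⁻¹' V),
        (e ⟨f (g • x), hgx⟩).1⁻¹ • (g • x) = (e ⟨f x, hx⟩).1⁻¹ • x := by
      intro x hx g hgx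
      obtain ⟨hm, hme⟩ := heg ⟨f x, hx⟩ g
      have h1 : (e ⟨f (g • x), hgx⟩).1 = g * (e ⟨f x, hx⟩).1 := by
        have h2 : (⟨f (g • x), hgx⟩ : (Qy ⁻¹' V : Set Y)) = ⟨g • f x, hm⟩ :=
          Subtype.ext (heq g x)
        rw [h2, hme]
      rw [h1, mul_inv_rev, mul_smul, inv_smul_smul]
    have svalOut : ∀ (x : X) (hx : f x ∈ Qy ⁻¹' V) (x' : X) (hx' : f x' ∈ Qy ⁻¹' V),
        (∃ g : G, g • x = x') →
        (e ⟨f x', hx'⟩).1⁻¹ • x' = (e ⟨f x, hx⟩).1⁻¹ • x := by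
      rintro x hx x' hx' ⟨g, rfl⟩
      exact sval x hx g hx'
    set U : Set X := f ⁻¹' (Qy ⁻¹' V) with hU
    have hUopen : IsOpen U := (hVopen.preimage cQy).preimage hf
    set s : U → X := fun x => (e ⟨f x.1, x.2⟩).1⁻¹ • x.1 with hs
    have cont_s : Continuous s := by
      apply Continuous.smul
      · exact (continuous_fst.comp (e.continuous.comp
          (Continuous.subtype_mk (hf.comp continuous_subtype_val) _))).inv
      · exact continuous_subtype_val
    set q' : U → (fbar ⁻¹' V : Set _) := fun x =>
      ⟨Qx x.1, by show fbar (Qx x.1) ∈ V; rw [hfbar]; exact x.2⟩ with hq'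
    have cont_q' : Continuous q' :=
      Continuous.subtype_mk (cQx.comp continuous_subtype_val) _
    have surj_q' : Function.Surjective q' := by
      intro u
      refine ⟨⟨u.1.out, houtmem u⟩, ?_⟩
      apply Subtype.ext
      show Qx u.1.out = u.1
      rw [hQx]
      exact Quotient.out_eq u.1
    have open_q' : IsOpenMap q' := by
      intro O hO
      have himg : q' '' O = Subtype.val ⁻¹' (Qx '' (Subtype.val '' O)) := by
        ext u
        constructor
        · rintro ⟨x, hxO, rfl⟩
          exact ⟨x.1, ⟨x, hxO, rfl⟩, rfl⟩
        · rintro ⟨x₀, ⟨x, hxO, rfl⟩, hx⟩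
          exact ⟨x, hxO, Subtype.ext hx⟩
      rw [himg]
      exact (openQx _ (hUopen.isOpenMap_subtype_val O hO)).preimage continuous_subtype_val
    have hoq : IsOpenQuotientMap q' := ⟨surj_q', cont_q', open_q'⟩
    set sigX : (fbar ⁻¹' V : Set _) → X :=
      fun u => (e ⟨f u.1.out, houtmem u⟩).1⁻¹ • u.1.out with hsigX
    have hcomp_sq : sigX ∘ q' = s := by
      funext x
      obtain ⟨g, hg⟩ := out_relX x.1
      exact svalOut x.1 x.2 _ (houtmem (q' x)) ⟨g, hg⟩
    have cont_sigX : Continuous sigX := (hoq.continuous_comp_iff).mp (by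
      rw [hcomp_sq]; exact cont_s)
    refine ⟨⟨fbar ⁻¹' V, hWopen, sigX,
      fun p => (e ⟨f p.1, hmemf p⟩).1,
      cont_sigX, ?_, ?_, ?_, ?_⟩, hbV⟩
    · exact continuous_fst.comp (e.continuous.comp
        (Continuous.subtype_mk (hf.comp continuous_subtype_val) _))
    · intro u
      show Qx ((e ⟨f u.1.out, houtmem u⟩).1⁻¹ • u.1.out) = u.1
      rw [hqX, hQx]
      exact Quotient.out_eq u.1
    · intro p
      obtain ⟨g, hg⟩ := out_relX p.1
      have h1 : sigX ⟨Qx p.1, p.2⟩ = (e ⟨f p.1, hmemf p⟩).1⁻¹ • p.1 :=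
        svalOut p.1 (hmemf p) _ (houtmem ⟨Qx p.1, p.2⟩) ⟨g, hg⟩
      show (e ⟨f p.1, hmemf p⟩).1 • sigX ⟨Qx p.1, p.2⟩ = p.1
      rw [h1]
      exact smul_inv_smul _ _
    · intro g p hg
      obtain ⟨hm, hme⟩ := heg ⟨f p.1, hmemf p⟩ g
      show (e ⟨f (g • p.1), _⟩).1 = g * (e ⟨f p.1, hmemf p⟩).1
      have h2 : (⟨f (g • p.1), hmemf ⟨g • p.1, hg⟩⟩ : (Qy ⁻¹' V : Set Y))
          = ⟨g • f p.1, hm⟩ := Subtype.ext (heq g p.1)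
      rw [h2, hme]
  -- assembly
  intro k H h₀ hcomp
  obtain ⟨ht₀, hht₀⟩ := bundle_lift Qx hqX chartsX k h₀
  obtain ⟨Ht, hHt0, hHtq⟩ := bundle_hlp Qy hqY chartsY k H
    ⟨fun a => f (ht₀ a), hf.comp ht₀.continuous⟩ (by
      intro a
      show Qy (f (ht₀ a)) = H (a, 0)
      rw [← hfbar (ht₀ a), hht₀ a, hcomp a])
  obtain ⟨Lt, hLt0, hLtf⟩ := hSerre k Ht ht₀ (fun a => (hHt0 a).symm)
  refine ⟨⟨fun p => Qx (Lt p), cQx.comp Lt.continuous⟩, ?_, ?_⟩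
  · intro a
    show Qx (Lt (a, 0)) = h₀ a
    rw [hLt0 a]
    exact hht₀ a
  · intro p
    show fbar (Qx (Lt p)) = H p
    rw [hfbar, hLtf p]
    exact hHtq p
end

section
/- Let $I$ be a small category, $F, G \colon I \to \mathrm{Top}$ diagrams of topological spaces, and $\alpha \colon F \Rightarrow G$ a natural transformation such that each component $\alpha_i \colon F(i) \to G(i)$ is a closed topological embedding. Suppose moreover that for each $i \in I$ the commutative square formed by $\alpha_i$, the colimit structure maps $\mu_i \colon F(i) \to \mathrm{colim}\,F$ and $\nu_i \colon G(i) \to \mathrm{colim}\,G$, and the induced map $\alpha_* \colon \mathrm{colim}\,F \to \mathrm{colim}\,G$, is Cartesian in the category of sets. Then $\alpha_*$ is a closed topological embedding. -/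
open CategoryTheory Limits Topology

theorem colimit_jointly_surjective' {I : Type*} [Category I] (F : I ⥤ TopCat) [HasColimit F]
    (c : (colimit F : TopCat)) : ∃ i x, colimit.ι F i x = c := by
  let S : Set (colimit F : TopCat) := ⋃ i, Set.range (colimit.ι F i)
  let D : Cocone F :=
    { pt := TopCat.of S
      ι :=
        { app := fun i => TopCat.ofHom ⟨fun x => ⟨colimit.ι F i x, Set.mem_iUnion.2 ⟨i, ⟨x, rfl⟩⟩⟩,
            (Continuous.subtype_mk (colimit.ι F i).hom.continuous _)⟩
          naturality := fun i j f => by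
            ext x
            exact Subtype.ext (ConcreteCategory.congr_hom
              (colimit.w F f) x) } }
  have key : colimit.desc F D ≫ (TopCat.ofHom ⟨Subtype.val, continuous_subtype_val⟩ : TopCat.of S ⟶ colimit F)
      = 𝟙 _ := by
    apply colimit.hom_ext
    intro i
    rw [← Category.assoc, colimit.ι_desc]
    rfl
  have : c ∈ S := by
    have := ConcreteCategory.congr_hom key c
    rw [comp_apply, id_apply] at this
    rw [← this]
    exact Subtype.mem _
  obtain ⟨t, ⟨i, rfl⟩, x, hx⟩ := this
  exact ⟨i, x, hx⟩

theorem colimit_isClosed_of_preimages {I : Type*} [Category I] (G : I ⥤ TopCat) [HasColimit G]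
    (s : Set (colimit G : TopCat)) (h : ∀ i, IsClosed (colimit.ι G i ⁻¹' s)) : IsClosed s := by
  let t : TopologicalSpace (colimit G : TopCat) :=
    ⨆ i, TopologicalSpace.coinduced (colimit.ι G i) (G.obj i).str
  let X' : TopCat := @TopCat.of (colimit G : TopCat) t
  let D : Cocone G :=
    { pt := X'
      ι :=
        { app := fun i => TopCat.ofHom ⟨colimit.ι G i,
            continuous_iff_coinduced_le.mpr
              (le_iSup (fun i => TopologicalSpace.coinduced (colimit.ι G i) (G.obj i).str) i)⟩
          naturality := fun i j f => by
            ext x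
            exact ConcreteCategory.congr_hom (colimit.w G f) x } }
  have hdesc : ⇑(colimit.desc G D) = id := by
    funext c
    obtain ⟨i, x, rfl⟩ := colimit_jointly_surjective' G c
    have := ConcreteCategory.congr_hom (colimit.ι_desc D i) x
    rw [comp_apply] at this
    exact this
  have h1 : TopologicalSpace.coinduced (⇑(colimit.desc G D)) (colimit G : TopCat).str ≤ t :=
    continuous_iff_coinduced_le.mp
      (@ContinuousMap.continuous _ _ (colimit G : TopCat).str t (colimit.desc G D).hom)
  rw [hdesc, @coinduced_id _ (colimit G : TopCat).str] at h1
  have hst : IsClosed[t] s := by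
    rw [isClosed_iSup_iff]
    intro i
    exact isClosed_coinduced.mpr (h i)
  exact hst.mono h1


/-- **Lemma A.1 of the paper (closed case)**: let `F, G : I ⥤ Top` be diagrams of
topological spaces and `α : F ⟶ G` a natural transformation whose components are closed
topological embeddings.  If for each `i` the square formed by `α.app i`, the colimit
structure maps and the induced map `α* : colim F → colim G` is Cartesian in the category of
sets (i.e. the canonical map from `F.obj i` to the set-theoretic pullback is a bijection),
then `α*` is a closed topological embedding. -/
theorem isClosedEmbedding_colimMap
    {I : Type*} [Category I] (F G : I ⥤ TopCat) (α : F ⟶ G)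
    [HasColimit F] [HasColimit G]
    (hclosed : ∀ i : I, Topology.IsClosedEmbedding (α.app i))
    (hcart : ∀ (i : I) (x : G.obj i) (c : (colimit F : TopCat)),
      colimMap α c = colimit.ι G i x →
        ∃! y : F.obj i, α.app i y = x ∧ colimit.ι F i y = c) :
    Topology.IsClosedEmbedding (colimMap α) := by
  have hsq : ∀ (i : I) (y : F.obj i),
      colimMap α (colimit.ι F i y) = colimit.ι G i (α.app i y) := by
    intro i y
    have := ConcreteCategory.congr_hom (ι_colimMap α i) y
    rw [comp_apply, comp_apply] at this
    exact this
  have hinj : Function.Injective (colimMap α) := by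
    intro c c' h
    obtain ⟨i, x, rfl⟩ := colimit_jointly_surjective' F c
    have h1 : colimMap α c' = colimit.ι G i (α.app i x) := by
      rw [← h, hsq]
    obtain ⟨y, ⟨hy1, hy2⟩, -⟩ := hcart i (α.app i x) c' h1
    rw [← hy2, (hclosed i).injective hy1]
  have hclosedmap : IsClosedMap (colimMap α) := by
    intro C hC
    apply colimit_isClosed_of_preimages G
    intro i
    have himg : ⇑(colimit.ι G i) ⁻¹' (⇑(colimMap α) '' C)
        = ⇑(α.app i) '' (⇑(colimit.ι F i) ⁻¹' C) := by
      ext x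
      constructor
      · rintro ⟨c, hc, hmap⟩
        obtain ⟨y, ⟨hy1, hy2⟩, -⟩ := hcart i x c hmap
        exact ⟨y, by rwa [Set.mem_preimage, hy2], hy1⟩
      · rintro ⟨y, hy, rfl⟩
        exact ⟨colimit.ι F i y, hy, hsq i y⟩
    rw [himg]
    exact (hclosed i).isClosedMap _ (hC.preimage (colimit.ι F i).hom.continuous)
  exact .of_continuous_injective_isClosedMap (colimMap α).hom.continuous hinj hclosedmap
end

section
/- Under the same hypotheses as the closed case but with each $\alpha_i \colon F(i) \to G(i)$ an open topological embedding (and each square Cartesian in sets), the induced map $\alpha_* \colon \mathrm{colim}\,F \to \mathrm{colim}\,G$ is an open topological embedding. -/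
open CategoryTheory Limits

/-- Type synonym for the carrier of a colimit, to carry the supremum topology. -/
def ColimCarrier {I : Type*} [Category I] (G : I ⥤ TopCat) [HasColimit G] : Type _ :=
  (colimit G : TopCat)

noncomputable instance colimCarrierTop {I : Type*} [Category I] (G : I ⥤ TopCat) [HasColimit G] :
    TopologicalSpace (ColimCarrier G) :=
  ⨆ i, (G.obj i).str.coinduced (fun y : G.obj i => (colimit.ι G i y : ColimCarrier G))

lemma colim_isOpen_of_preimages {I : Type*} [Category I] (G : I ⥤ TopCat)
    [HasColimit G] (U : Set (colimit G : TopCat))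
    (h : ∀ i, IsOpen (colimit.ι G i ⁻¹' U)) : IsOpen U := by
  let X : TopCat := @TopCat.of (ColimCarrier G) (colimCarrierTop G)
  let c : Cocone G :=
    { pt := X
      ι :=
        { app := fun i => TopCat.ofHom (@ContinuousMap.mk (G.obj i) (ColimCarrier G) _ (colimCarrierTop G)
            (fun y : G.obj i => (colimit.ι G i y : ColimCarrier G))
            (continuous_iff_coinduced_le.mpr
              (le_iSup (fun i => (G.obj i).str.coinduced
                (fun y : G.obj i => (colimit.ι G i y : ColimCarrier G))) i)))
          naturality := fun i j f => by
            ext x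
            exact congrArg (fun z : (colimit G : TopCat) => (z : ColimCarrier G))
              (ConcreteCategory.congr_hom (colimit.w G f) x) } }
  let d : (colimit G : TopCat) ⟶ X := colimit.desc G c
  have hd : ∀ z : (colimit G : TopCat), d z = (z : ColimCarrier G) := by
    intro z
    obtain ⟨i, y, rfl⟩ := Concrete.colimit_exists_rep G z
    exact ConcreteCategory.congr_hom (colimit.ι_desc c i) y
  have hUT : @IsOpen (ColimCarrier G) (colimCarrierTop G) U :=
    isOpen_iSup_iff.mpr fun i => isOpen_coinduced.mpr (h i)
  have hc : @Continuous _ _ (colimit G).str (colimCarrierTop G)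
      (fun z : (colimit G : TopCat) => z) := by
    have h2 := d.hom.continuous
    rw [show ⇑d.hom = (fun z : (colimit G : TopCat) => z) from funext hd] at h2
    exact h2
  exact hUT.preimage hc

/-- **Lemma A.1 of the paper (open case)**: let `F, G : I ⥤ Top` be diagrams of
topological spaces and `α : F ⟶ G` a natural transformation whose components are open
topological embeddings.  If for each `i` the square formed by `α.app i`, the colimit
structure maps and the induced map `α* : colim F → colim G` is Cartesian in the category of
sets (i.e. the canonical map from `F.obj i` to the set-theoretic pullback is a bijection),
then `α*` is an open topological embedding. -/
theorem isOpenEmbedding_colimMap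
    {I : Type*} [Category I] (F G : I ⥤ TopCat) (α : F ⟶ G)
    [HasColimit F] [HasColimit G]
    (hopen : ∀ i : I, Topology.IsOpenEmbedding (α.app i))
    (hcart : ∀ (i : I) (x : G.obj i) (c : (colimit F : TopCat)),
      colimMap α c = colimit.ι G i x →
        ∃! y : F.obj i, α.app i y = x ∧ colimit.ι F i y = c) :
    Topology.IsOpenEmbedding (colimMap α) := by
  have hcomm : ∀ (i : I) (y : F.obj i),
      colimMap α (colimit.ι F i y) = colimit.ι G i (α.app i y) := by
    intro i y
    exact ConcreteCategory.congr_hom (ι_colimMap α i) y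
  have hinj : Function.Injective (colimMap α) := by
    intro c c' h
    obtain ⟨i, x', rfl⟩ := Concrete.colimit_exists_rep F c'
    have h1 : colimMap α c = colimit.ι G i (α.app i x') := by
      rw [h]; exact hcomm i x'
    obtain ⟨y, ⟨hy1, hy2⟩, -⟩ := hcart i (α.app i x') c h1
    have : y = x' := (hopen i).injective hy1
    rw [← hy2, this]
  have hopenmap : IsOpenMap (colimMap α) := by
    intro U hU
    apply colim_isOpen_of_preimages
    intro i
    have key : colimit.ι G i ⁻¹' (colimMap α '' U) = α.app i '' (colimit.ι F i ⁻¹' U) := by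
      ext x
      constructor
      · rintro hx
        obtain ⟨c, hcU, hc⟩ := hx
        replace hc : colimMap α c = colimit.ι G i x := hc
        obtain ⟨y, ⟨hy1, hy2⟩, -⟩ := hcart i x c hc
        exact ⟨y, by rw [Set.mem_preimage, hy2]; exact hcU, hy1⟩
      · rintro ⟨y, hy, rfl⟩
        exact ⟨colimit.ι F i y, hy, hcomm i y⟩
    rw [key]
    exact (hopen i).isOpenMap _ (hU.preimage (colimit.ι F i).hom.continuous)
  exact Topology.IsOpenEmbedding.of_continuous_injective_isOpenMap
    (colimMap α).hom.continuous hinj hopenmap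
end

section
/- Let $G$ be a topological group, and suppose $X$ is a $G$-space that is $G$-locally retractile. Then for any continuous path $\gamma \colon [0,1] \to X$, there exists a continuous path $\phi \colon [0,1] \to G$ with $\phi(0) = e$ and $\phi(t) \cdot \gamma(0) = \gamma(t)$ for all $t \in [0,1]$. -/
/-- Abstract isotopy extension (cf. Theorem 4.7 of the paper): if `X` is `G`-locally
retractile, then any path `γ` in `X` lifts to a path `φ` in `G` starting at the identity
with `φ t • γ 0 = γ t` for all `t`. -/
theorem path_lifting_of_locallyRetractile
    {G X : Type*} [Group G] [TopologicalSpace G] [IsTopologicalGroup G]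
    [TopologicalSpace X] [MulAction G X] [ContinuousSMul G X]
    (hret : IsLocallyRetractile G X)
    (γ : C(unitInterval, X)) :
    ∃ φ : C(unitInterval, G), φ 0 = 1 ∧ ∀ t, φ t • γ 0 = γ t := by
  -- A is the set of times `s` up to which the path can be lifted.
  set A : Set ℝ := {s | s ∈ Set.Icc (0:ℝ) 1 ∧ ∃ φ : C(unitInterval, G), φ 0 = 1 ∧
      ∀ t : unitInterval, (t : ℝ) ≤ s → φ t • γ 0 = γ t} with hA
  have h0A : (0:ℝ) ∈ A := by
    refine ⟨⟨le_refl 0, zero_le_one⟩, ContinuousMap.const _ 1, rfl, ?_⟩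
    intro t ht
    have : t = 0 := Subtype.ext (le_antisymm ht t.2.1)
    subst this
    simp
  have hAne : A.Nonempty := ⟨0, h0A⟩
  have hbdd : BddAbove A := ⟨1, fun x hx => hx.1.2⟩
  set s₀ : ℝ := sSup A with hs₀
  have hs₀0 : 0 ≤ s₀ := le_csSup hbdd h0A
  have hs₀1 : s₀ ≤ 1 := csSup_le hAne fun x hx => hx.1.2
  set star : unitInterval := ⟨s₀, hs₀0, hs₀1⟩ with hstar
  obtain ⟨V, σ, hVopen, hxV, hσcont, hσone, hσsmul⟩ := hret (γ star)
  -- find ε such that γ t ∈ V whenever |t - s₀| < ε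
  have hpre : IsOpen (γ ⁻¹' V) := hVopen.preimage γ.continuous
  obtain ⟨ε, hε, hball⟩ := Metric.isOpen_iff.1 hpre star hxV
  have hmemV : ∀ t : unitInterval, |(t : ℝ) - s₀| < ε → γ t ∈ V := by
    intro t ht
    apply hball
    rwa [Metric.mem_ball, Subtype.dist_eq, Real.dist_eq]
  -- pick s ∈ A with s₀ - ε < s
  obtain ⟨s, hsA, hs_gt⟩ := exists_lt_of_lt_csSup hAne (by linarith : s₀ - ε < s₀)
  have hs_le : s ≤ s₀ := le_csSup hbdd hsA
  obtain ⟨⟨hs0, hs1⟩, φ, hφ0, hφ⟩ := hsA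
  -- the new endpoint u
  set u : ℝ := min (s₀ + ε / 2) 1 with hu
  have hu0 : 0 ≤ u := le_min (by linarith) zero_le_one
  have hu1 : u ≤ 1 := min_le_right _ _
  have hsu : s ≤ u := le_min (by linarith) hs1
  have hdist : ∀ r : ℝ, s ≤ r → r ≤ u → |r - s₀| < ε := by
    intro r h1 h2
    have h3 : r ≤ s₀ + ε / 2 := le_trans h2 (min_le_left _ _)
    rw [abs_lt]; constructor <;> linarith
  -- the clamping map to [s, u]
  have hclamp_mem : ∀ t : unitInterval, max s (min (t:ℝ) u) ∈ Set.Icc (0:ℝ) 1 := by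
    intro t
    constructor
    · exact le_trans hs0 (le_max_left _ _)
    · exact max_le hs1 (le_trans (min_le_right _ _) hu1)
  set clamp : unitInterval → unitInterval := fun t => ⟨max s (min (t:ℝ) u), hclamp_mem t⟩
    with hclamp
  have hclamp_cont : Continuous clamp :=
    Continuous.subtype_mk (continuous_const.max (continuous_subtype_val.min continuous_const)) _
  have hclampV : ∀ t : unitInterval, γ (clamp t) ∈ V := by
    intro t
    apply hmemV
    exact hdist _ (le_max_left _ _) (max_le hsu (min_le_right _ _))
  set σγ : unitInterval → G := fun t => σ ⟨γ (clamp t), hclampV t⟩ with hσγ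
  have hσγ_cont : Continuous σγ :=
    hσcont.comp (Continuous.subtype_mk (γ.continuous.comp hclamp_cont) _)
  have hσγ_congr : ∀ {t t' : unitInterval}, clamp t = clamp t' → σγ t = σγ t' := by
    intro t t' h
    simp only [hσγ]
    exact congrArg σ (Subtype.ext (congrArg (fun z => γ z) h))
  have hkey : ∀ t : unitInterval, σγ t • γ star = γ (clamp t) := fun t =>
    hσsmul ⟨γ (clamp t), hclampV t⟩
  -- the point s as an element of the interval
  set S : unitInterval := ⟨s, hs0, hs1⟩ with hS
  have hclampS : clamp S = S := Subtype.ext (by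
    show max s (min s u) = s
    rw [min_eq_left hsu, max_self])
  -- min with s
  have hmins_mem : ∀ t : unitInterval, min (t:ℝ) s ∈ Set.Icc (0:ℝ) 1 := fun t =>
    ⟨le_min t.2.1 hs0, le_trans (min_le_left _ _) t.2.2⟩
  set mins : unitInterval → unitInterval := fun t => ⟨min (t:ℝ) s, hmins_mem t⟩ with hmins
  have hmins_cont : Continuous mins :=
    Continuous.subtype_mk (continuous_subtype_val.min continuous_const) _
  -- the extended lift
  set φ' : C(unitInterval, G) := ⟨fun t => σγ t * (σγ S)⁻¹ * φ (mins t), by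
    exact ((hσγ_cont.mul continuous_const).mul (φ.continuous.comp hmins_cont))⟩ with hφ'
  have hφ'0 : φ' 0 = 1 := by
    have hc0 : clamp 0 = S := Subtype.ext (by
      show max s (min ((0 : unitInterval) : ℝ) u) = s
      rw [Set.Icc.coe_zero, min_eq_left hu0, max_eq_left hs0])
    have hm0 : mins 0 = 0 := Subtype.ext (by
      show min ((0 : unitInterval) : ℝ) s = ((0 : unitInterval) : ℝ)
      rw [Set.Icc.coe_zero, min_eq_left hs0])
    show σγ 0 * (σγ S)⁻¹ * φ (mins 0) = 1
    rw [hσγ_congr (hc0.trans hclampS.symm), hm0, hφ0, mul_one, mul_inv_cancel]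
  have hφ'lift : ∀ t : unitInterval, (t : ℝ) ≤ u → φ' t • γ 0 = γ t := by
    intro t htu
    show (σγ t * (σγ S)⁻¹ * φ (mins t)) • γ 0 = γ t
    rcases le_or_gt (t : ℝ) s with hts | hst
    · -- on [0, s] the new lift agrees with φ
      have hct : clamp t = clamp S := Subtype.ext (by
        show max s (min (t:ℝ) u) = max s (min s u)
        rw [min_eq_left (le_trans hts hsu), min_eq_left hsu, max_eq_left hts, max_self])
      have hmt : mins t = t := Subtype.ext (min_eq_left hts)
      rw [hσγ_congr hct, mul_inv_cancel, one_mul, hmt]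
      exact hφ t hts
    · -- on [s, u] compose with the local retraction
      have hct : clamp t = t := Subtype.ext (by
        show max s (min (t:ℝ) u) = (t : ℝ)
        rw [min_eq_left htu, max_eq_right hst.le])
      have hmt : mins t = S := Subtype.ext (min_eq_right hst.le)
      rw [hmt, mul_smul, mul_smul, hφ S le_rfl]
      have h1 : σγ S • γ star = γ S := by rw [hkey S, hclampS]
      have h2 : (σγ S)⁻¹ • γ S = γ star := by rw [← h1, inv_smul_smul]
      rw [h2, hkey t, hct]
  have huA : u ∈ A := ⟨⟨hu0, hu1⟩, φ', hφ'0, hφ'lift⟩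
  have hus₀ : u ≤ s₀ := le_csSup hbdd huA
  have hs₀_eq : s₀ = 1 := by
    by_contra h
    have hlt : s₀ < 1 := lt_of_le_of_ne hs₀1 h
    have : s₀ < u := lt_min (by linarith) hlt
    linarith
  have hu_eq : u = 1 := by
    rw [hu, hs₀_eq]
    exact min_eq_right (by linarith)
  rw [hu_eq] at huA
  obtain ⟨_, ψ, hψ0, hψ⟩ := huA
  exact ⟨ψ, hψ0, fun t => hψ t t.2.2⟩
end
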